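/- arXiv:1201.6104 — 8 statements merged into one kernel-verified Lean document; each statement's English description precedes it below -/
import Mathlib

section
/- Let G be a countable group with minimal non-elementary convergence actions on compact metrizable spaces X and Y, and let π : X → Y be a G-equivariant continuous map. If r ∈ Y is a conical limit point, then π⁻¹(r) is a single point, and that point is a conical limit point of X. -/
open Filter Topology Pointwise

section Defs

variable (G : Type) [Group G] (X : Type) [UniformSpace X] [MulAction G X]

/-- `g` is a convergence sequence with repelling point `r` and attracting point `a`:
`g n` converges to `a` uniformly on compact subsets of `X \ {r}`, and `(g n)⁻¹`
converges to `r` uniformly on compact subsets of `X \ {a}`. -/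
def IsConvSeq (g : ℕ → G) (r a : X) : Prop :=
  Function.Injective g ∧
  (∀ K : Set X, IsCompact K → r ∉ K →
    TendstoUniformlyOn (fun n x => g n • x) (fun _ => a) atTop K) ∧
  (∀ K : Set X, IsCompact K → a ∉ K →
    TendstoUniformlyOn (fun n x => (g n)⁻¹ • x) (fun _ => r) atTop K)

/-- The action of `G` on `X` is a convergence action: `X` is infinite, the action is
continuous, and every injective sequence in `G` has a convergence subsequence. -/
def IsConvergenceAction : Prop :=
  Infinite X ∧ (∀ g : G, Continuous fun x : X => g • x) ∧
  ∀ g : ℕ → G, Function.Injective g →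
    ∃ (φ : ℕ → ℕ) (r a : X), StrictMono φ ∧ IsConvSeq G X (g ∘ φ) r a

/-- The limit set of a subgroup `H`: all repelling and attracting points of
convergence sequences with entries in `H`. -/
def limitSetOf (H : Subgroup G) : Set X :=
  {p | ∃ (g : ℕ → G) (r a : X), (∀ n, g n ∈ H) ∧ IsConvSeq G X g r a ∧ (p = r ∨ p = a)}

/-- The limit set of the action of `G` on `X`. -/
def limitSet : Set X := limitSetOf G X ⊤

/-- `p` is a conical limit point: there is a convergence sequence `g` with attracting
point `a` such that `g n • p` converges to a point `b ≠ a`. -/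
def IsConicalLimitPoint (p : X) : Prop :=
  ∃ (g : ℕ → G) (r a b : X), IsConvSeq G X g r a ∧
    Tendsto (fun n => g n • p) atTop (nhds b) ∧ b ≠ a

/-- `l` is loxodromic: infinite order with exactly two fixed points. -/
def IsLoxodromic (l : G) : Prop :=
  ¬ IsOfFinOrder l ∧ ∃ x y : X, x ≠ y ∧ {z : X | l • z = z} = {x, y}

/-- `H` is a parabolic subgroup: infinite, fixes exactly one point, and has no
loxodromic elements. -/
def IsParabolicSubgroup (H : Subgroup G) : Prop :=
  (H : Set G).Infinite ∧ (∃! p : X, ∀ h ∈ H, h • p = p) ∧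
  ∀ h ∈ H, ¬ IsLoxodromic G X h

/-- `H` is a maximal parabolic subgroup. -/
def IsMaxParabolic (H : Subgroup G) : Prop :=
  IsParabolicSubgroup G X H ∧
  ∀ H' : Subgroup G, IsParabolicSubgroup G X H' → H ≤ H' → H' = H

/-- The peripheral structure of `X`: the set of maximal parabolic subgroups. -/
def periph : Set (Subgroup G) := {H | IsMaxParabolic G X H}

/-- `p` is a bounded parabolic point: its maximal parabolic subgroup acts
cocompactly on the complement of `p`. -/
def IsBoundedParabolicPoint (p : X) : Prop :=
  ∃ H : Subgroup G, IsMaxParabolic G X H ∧ (∀ h ∈ H, h • p = p) ∧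
    ∃ K : Set X, IsCompact K ∧ K ⊆ {p}ᶜ ∧ (⋃ h ∈ H, (fun x => h • x) '' K) = {p}ᶜ

/-- The action is minimal: every orbit is dense. -/
def IsMinimalAction : Prop := ∀ x : X, Dense {y : X | ∃ g : G, y = g • x}

/-- A minimal non-elementary convergence action. -/
def IsMinimalNonElementary : Prop :=
  IsConvergenceAction G X ∧ IsMinimalAction G X ∧ (limitSet G X).Infinite

/-- A geometrically finite convergence action: every point is a conical limit point
or a bounded parabolic point. -/
def IsGeomFinite : Prop :=
  IsConvergenceAction G X ∧
  ∀ p : X, IsConicalLimitPoint G X p ∨ IsBoundedParabolicPoint G X p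

end Defs

/-- A group is virtually cyclic. -/
def VirtuallyCyclic (K : Type) [Group K] : Prop :=
  ∃ C : Subgroup K, IsCyclic ↥C ∧ C.FiniteIndex

/-- A group admits no non-elementary convergence action on any compact metrizable
space. -/
def NoNonElementaryAction (H : Type) [Group H] : Prop :=
  ∀ (Z : Type) [MetricSpace Z] [CompactSpace Z] [MulAction H Z],
    IsConvergenceAction H Z → ¬ (limitSet H Z).Infinite

/-- The induced action on an invariant subset. -/
def invariantSubAction {G : Type} [Group G] {X : Type} [MulAction G X] (S : Set X)
    (hS : ∀ (g : G), ∀ x ∈ S, g • x ∈ S) : MulAction G ↥S where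
  smul g x := ⟨g • (x : X), hS g x x.2⟩
  one_smul x := Subtype.ext (one_smul G (x : X))
  mul_smul g h x := Subtype.ext (mul_smul g h (x : X))

/-- A subsequence of a convergence sequence is a convergence sequence with the same
repelling and attracting points. -/
lemma isConvSeq_comp_strictMono {G X : Type} [Group G] [UniformSpace X] [MulAction G X]
    {g : ℕ → G} {r a : X} (h : IsConvSeq G X g r a) {ψ : ℕ → ℕ} (hψ : StrictMono ψ) :
    IsConvSeq G X (g ∘ ψ) r a := by
  obtain ⟨h1, h2, h3⟩ := h
  refine ⟨h1.comp hψ.injective, fun K hK hrK u hu => ?_, fun K hK haK u hu => ?_⟩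
  · exact hψ.tendsto_atTop.eventually (h2 K hK hrK u hu)
  · exact hψ.tendsto_atTop.eventually (h3 K hK haK u hu)

/-- the preimage of a conical limit point under an equivariant
continuous map between minimal non-elementary convergence actions is a single
point, which is a conical limit point. -/
theorem stmt2 {G : Type} [Group G] [Countable G] {X Y : Type}
    [MetricSpace X] [CompactSpace X] [MetricSpace Y] [CompactSpace Y]
    [MulAction G X] [MulAction G Y]
    (hX : IsMinimalNonElementary G X) (hY : IsMinimalNonElementary G Y)
    (π : X → Y) (hπ : Continuous π)
    (heq : ∀ (g : G) (x : X), π (g • x) = g • π x)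
    (r : Y) (hr : IsConicalLimitPoint G Y r) :
    ∃ x : X, π ⁻¹' {r} = {x} ∧ IsConicalLimitPoint G X x := by
  classical
  obtain ⟨hXc, hXmin, hXlim⟩ := hX
  obtain ⟨hYc, hYmin, hYlim⟩ := hY
  haveI : Infinite X := hXc.1
  haveI : Infinite Y := hYc.1
  obtain ⟨g, r', a, b, hgconv, htends, hba⟩ := hr
  obtain ⟨hginj, hgfwd, hgbwd⟩ := hgconv
  obtain ⟨φ, rX, aX, hφ, hconvX⟩ := hXc.2.2 g hginj
  obtain ⟨hinjX, hfwdX, hbwdX⟩ := id hconvX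
  -- π is surjective
  have hsurj : Function.Surjective π := by
    have x₀ : X := Classical.arbitrary X
    have hd : Dense {y : Y | ∃ γ : G, y = γ • π x₀} := hYmin (π x₀)
    have hsub : {y : Y | ∃ γ : G, y = γ • π x₀} ⊆ Set.range π := by
      rintro y ⟨γ, rfl⟩; exact ⟨γ • x₀, heq γ x₀⟩
    have hdr : Dense (Set.range π) := hd.mono hsub
    have hcl : IsClosed (Set.range π) := (isCompact_range hπ).isClosed
    have : Set.range π = Set.univ := hcl.closure_eq ▸ hdr.closure_eq
    exact Set.range_eq_univ.mp this
  -- pointwise convergence in X away from rX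
  have hpt : ∀ x : X, x ≠ rX → Tendsto (fun n => g (φ n) • x) atTop (𝓝 aX) := by
    intro x hx
    have h := hfwdX {x} isCompact_singleton
      (by simp [Set.mem_singleton_iff, Ne.symm hx])
    exact h.tendsto_at rfl
  -- pointwise convergence in Y away from r'
  have hptY : ∀ y : Y, y ≠ r' → Tendsto (fun n => g n • y) atTop (𝓝 a) := by
    intro y hy
    have h := hgfwd {y} isCompact_singleton
      (by simp [Set.mem_singleton_iff, Ne.symm hy])
    exact h.tendsto_at rfl
  -- a point of X avoiding rX whose image avoids r'
  obtain ⟨y₁, hy₁⟩ :=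
    (Set.Finite.insert r' (Set.finite_singleton (π rX))).infinite_compl.nonempty
  obtain ⟨x₁, rfl⟩ := hsurj y₁
  simp only [Set.mem_compl_iff, Set.mem_insert_iff, Set.mem_singleton_iff, not_or] at hy₁
  have hx₁ : x₁ ≠ rX := fun h => hy₁.2 (by rw [h])
  -- π aX = a
  have haX : π aX = a := by
    have h1 : Tendsto (fun n => π (g (φ n) • x₁)) atTop (𝓝 (π aX)) :=
      (hπ.tendsto aX).comp (hpt x₁ hx₁)
    have h2 : Tendsto (fun n => g (φ n) • π x₁) atTop (𝓝 a) :=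
      (hptY (π x₁) hy₁.1).comp hφ.tendsto_atTop
    simp only [heq] at h1
    exact tendsto_nhds_unique h1 h2
  -- any preimage of r equals rX
  have hC : ∀ x : X, π x = r → x = rX := by
    intro x hx
    by_contra hne
    have h1 : Tendsto (fun n => π (g (φ n) • x)) atTop (𝓝 (π aX)) :=
      (hπ.tendsto aX).comp (hpt x hne)
    have h1' : Tendsto (fun n => g (φ n) • r) atTop (𝓝 a) := by
      simpa [heq, hx, haX] using h1
    have h2 : Tendsto (fun n => g (φ n) • r) atTop (𝓝 b) :=
      htends.comp hφ.tendsto_atTop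
    exact hba (tendsto_nhds_unique h2 h1')
  obtain ⟨x₀, hx₀⟩ := hsurj r
  have hrX : π rX = r := by
    have := hC x₀ hx₀; rwa [this] at hx₀
  -- extract a convergent subsequence of g (φ n) • rX
  obtain ⟨bX, -, ψ, hψ, hbX⟩ := isCompact_univ.tendsto_subseq
    (fun n => (Set.mem_univ (g (φ n) • rX)))
  have hπbX : π bX = b := by
    have h1 : Tendsto (fun n => π (g (φ (ψ n)) • rX)) atTop (𝓝 (π bX)) :=
      (hπ.tendsto bX).comp hbX
    have h2 : Tendsto (fun n => g (φ (ψ n)) • r) atTop (𝓝 b) :=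
      htends.comp (hφ.comp hψ).tendsto_atTop
    refine tendsto_nhds_unique ?_ h2
    simpa [heq, hrX] using h1
  have hneX : bX ≠ aX := fun h => hba (by rw [← hπbX, h, haX])
  refine ⟨rX, ?_, ?_⟩
  · ext x
    simp only [Set.mem_preimage, Set.mem_singleton_iff]
    exact ⟨hC x, fun h => h ▸ hrX⟩
  · exact ⟨g ∘ (φ ∘ ψ), rX, aX, bX,
      isConvSeq_comp_strictMono hconvX hψ, hbX, hneX⟩
end

section
/- Let G be a countable group with minimal non-elementary convergence actions on compact metrizable spaces X and Y, and let π : X → Y be a G-equivariant continuous map. If q ∈ Y is a bounded parabolic point with maximal parabolic subgroup H, then π⁻¹(q) equals the limit set Λ(H, X) of the induced action of H on X. -/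
open Filter Topology Pointwise

set_option linter.unusedSectionVars false

section Aux
variable {G : Type} [Group G] {Y : Type} [MetricSpace Y] [CompactSpace Y] [MulAction G Y]

/-- pointwise convergence at a point off the repeller -/
lemma convseq_smul_tendsto {g : ℕ → G} {r a : Y} (hc : IsConvSeq G Y g r a)
    {x : Y} (hx : x ≠ r) : Tendsto (fun n => g n • x) atTop (𝓝 a) :=
  (hc.2.1 {x} isCompact_singleton (by simpa using (Ne.symm hx))).tendsto_at (Set.mem_singleton x)

/-- inverse of a convergence sequence -/
lemma convseq_inv {g : ℕ → G} {r a : Y} (hc : IsConvSeq G Y g r a) :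
    IsConvSeq G Y (fun n => (g n)⁻¹) a r := by
  refine ⟨fun n m hnm => hc.1 (inv_injective hnm), hc.2.2, ?_⟩
  simpa [inv_inv] using hc.2.1

/-- covering lemma from minimality: translates of a nonempty open set cover -/
lemma aux_cover (hmin : IsMinimalAction G Y) (hcont : ∀ g : G, Continuous fun y : Y => g • y)
    {O : Set Y} (hO : IsOpen O) (hne : O.Nonempty) :
    ∃ F : Finset G, ∀ y : Y, ∃ g ∈ F, g • y ∈ O := by
  have hcover : (Set.univ : Set Y) ⊆ ⋃ g : G, (fun y : Y => g • y) ⁻¹' O := by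
    intro z _
    obtain ⟨w, hw, hwO⟩ := (hmin z).exists_mem_open hO hne
    obtain ⟨g, rfl⟩ := hw
    exact Set.mem_iUnion.2 ⟨g, hwO⟩
  obtain ⟨F, hF⟩ := isCompact_univ.elim_finite_subcover _
    (fun g : G => (hO.preimage (hcont g))) hcover
  refine ⟨F, fun y => ?_⟩
  have := hF (Set.mem_univ y)
  simpa using this

/-- no isolated points: every ball contains a second point -/
lemma aux_acc (hY : IsMinimalNonElementary G Y) (y : Y) (δ : ℝ) (hδ : 0 < δ) :
    ∃ b : Y, b ≠ y ∧ dist b y < δ := by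
  by_contra hcon
  push_neg at hcon
  have hball : Metric.ball y δ ⊆ {y} := by
    intro z hz
    by_contra hzy
    exact absurd (Metric.mem_ball.1 hz) (not_lt.2 (hcon z hzy))
  obtain ⟨F, hF⟩ := aux_cover hY.2.1 hY.1.2.1 Metric.isOpen_ball ⟨y, Metric.mem_ball_self hδ⟩
  have hsub : (Set.univ : Set Y) ⊆ (fun g : G => g⁻¹ • y) '' F := by
    intro z _
    obtain ⟨g, hgF, hgz⟩ := hF z
    have : g • z = y := hball hgz
    exact ⟨g, hgF, by simp only [← this, inv_smul_smul]⟩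
  haveI := hY.1.1
  exact Set.infinite_univ ((F.finite_toSet.image _).subset hsub)

end Aux

section KeyB
variable {G : Type} [Group G] {Y : Type} [MetricSpace Y] [CompactSpace Y] [MulAction G Y]

/-- Every convergence sequence with entries in a maximal parabolic subgroup fixing `q`
has attracting point `q`. -/
lemma lemB (hY : IsMinimalNonElementary G Y) {H : Subgroup G} {q : Y}
    (hmax : IsMaxParabolic G Y H) (hfix : ∀ h ∈ H, h • q = q)
    {g : ℕ → G} (hg : ∀ n, g n ∈ H) {r a : Y} (hc : IsConvSeq G Y g r a) : a = q := by
  by_contra hne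
  -- step 1: the repeller must be q
  have hrq : r = q := by
    by_contra hr
    have h1 : Tendsto (fun n => g n • q) atTop (𝓝 a) :=
      convseq_smul_tendsto hc (Ne.symm hr)
    have h2 : Tendsto (fun _ : ℕ => q) atTop (𝓝 a) := by
      have he : (fun n => g n • q) = fun _ : ℕ => q := funext fun n => hfix _ (hg n)
      rwa [he] at h1
    exact hne (tendsto_nhds_unique h2 tendsto_const_nhds)
  -- setup: a ≠ q, small closed ball U around a
  have hdaq : 0 < dist a q := dist_pos.2 hne
  have hδ : 0 < dist a q / 2 := by positivity
  obtain ⟨b, hbne, hbd⟩ := aux_acc hY a (dist a q / 2) hδ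
  have hε : 0 < dist b a := dist_pos.2 hbne
  set U : Set Y := Metric.closedBall a (dist a q / 2) with hUdef
  have hUc : IsCompact U := Metric.isClosed_closedBall.isCompact
  have haU : a ∈ U := Metric.mem_closedBall_self hδ.le
  have hbU : b ∈ U := Metric.mem_closedBall.2 hbd.le
  have hqU : q ∉ U := by
    intro hq
    have h := Metric.mem_closedBall.1 hq
    rw [dist_comm] at h
    linarith
  -- step 2: find an element l ∈ H contracting U
  have huni := hc.2.1 U hUc (by rwa [hrq])
  rw [Metric.tendstoUniformlyOn_iff] at huni
  obtain ⟨N, hN⟩ := Filter.eventually_atTop.1 (huni (dist b a / 2) (by positivity))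
  set l : G := g N with hldef
  have hlH : l ∈ H := hg N
  have hstep : ∀ x ∈ U, l • x ∈ U ∧ dist a (l • x) < dist b a / 2 := by
    intro x hx
    have hd := hN N le_rfl x hx
    refine ⟨Metric.mem_closedBall.2 ?_, hd⟩
    have h2 : dist (l • x) a < dist b a / 2 := by rw [dist_comm]; exact hd
    linarith
  have hpow : ∀ m : ℕ, ∀ x ∈ U, l ^ (m + 1) • x ∈ U ∧ dist a (l ^ (m + 1) • x) < dist b a / 2 := by
    intro m
    induction m with
    | zero => intro x hx; simpa [pow_one] using hstep x hx
    | succ m ih =>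
      intro x hx
      have h1 := ih x hx
      have h2 := hstep _ h1.1
      have hrw : l ^ (m + 1 + 1) • x = l • l ^ (m + 1) • x := by
        rw [pow_succ', mul_smul]
      rw [hrw]
      exact h2
  -- step 3: l has infinite order
  have hord : ¬ IsOfFinOrder l := by
    intro hfin
    obtain ⟨k, hk, hlk⟩ := isOfFinOrder_iff_pow_eq_one.1 hfin
    obtain ⟨m, rfl⟩ : ∃ m, k = m + 1 := ⟨k - 1, (Nat.succ_pred_eq_of_pos hk).symm⟩
    have h3 := (hpow m b hbU).2
    rw [hlk, one_smul] at h3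
    rw [dist_comm] at h3
    linarith
  -- step 4: positive powers of l form an injective sequence
  have hinj : Function.Injective (fun n : ℕ => l ^ (n + 1)) := by
    intro n m hnm
    have h2 : l ^ (n + 1) = l ^ (m + 1) := hnm
    have := injective_pow_iff_not_isOfFinOrder.2 hord h2
    omega
  obtain ⟨φ, ρ, α, hφmono, hcp⟩ := hY.1.2.2 _ hinj
  have hmemH : ∀ i, ((fun n : ℕ => l ^ (n + 1)) ∘ φ) i ∈ H := fun i => pow_mem hlH _
  -- step 5: the attracting point α of the powers lies in U, and ρ = q
  obtain ⟨c, hcU, hcρ⟩ : ∃ c, c ∈ U ∧ c ≠ ρ := by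
    by_cases h : a = ρ
    · exact ⟨b, hbU, fun hh => hbne (hh.trans h.symm)⟩
    · exact ⟨a, haU, h⟩
  have hcc : Tendsto (fun i => ((fun n : ℕ => l ^ (n + 1)) ∘ φ) i • c) atTop (𝓝 α) :=
    convseq_smul_tendsto hcp hcρ
  have hαU : α ∈ U :=
    Metric.isClosed_closedBall.mem_of_tendsto hcc
      (Filter.Eventually.of_forall fun i => (hpow (φ i) c hcU).1)
  have hαq : α ≠ q := fun h => hqU (h ▸ hαU)
  have hρq : ρ = q := by
    have h2 : Tendsto (fun i => (((fun n : ℕ => l ^ (n + 1)) ∘ φ) i)⁻¹ • q) atTop (𝓝 ρ) :=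
      convseq_smul_tendsto (convseq_inv hcp) (Ne.symm hαq)
    have he : (fun i => (((fun n : ℕ => l ^ (n + 1)) ∘ φ) i)⁻¹ • q) = fun _ : ℕ => q :=
      funext fun i => hfix _ (inv_mem (hmemH i))
    rw [he] at h2
    exact tendsto_nhds_unique h2 tendsto_const_nhds
  -- step 6: l fixes α
  have hlc : l • c ∈ U := by
    have := (hpow 0 c hcU).1; rwa [pow_one] at this
  have hfixα : l • α = α := by
    have h3 : Tendsto (fun i => ((fun n : ℕ => l ^ (n + 1)) ∘ φ) i • (l • c)) atTop (𝓝 α) :=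
      convseq_smul_tendsto hcp (fun h => hqU (hρq ▸ h ▸ hlc))
    have h4 : (fun i => ((fun n : ℕ => l ^ (n + 1)) ∘ φ) i • (l • c))
        = fun i => l • (((fun n : ℕ => l ^ (n + 1)) ∘ φ) i • c) := by
      funext i
      simp only [Function.comp_apply, smul_smul]
      rw [← pow_succ, ← pow_succ']
    rw [h4] at h3
    have h5 : Tendsto (fun i => l • (((fun n : ℕ => l ^ (n + 1)) ∘ φ) i • c)) atTop
        (𝓝 (l • α)) := ((hY.1.2.1 l).tendsto α).comp hcc
    exact (tendsto_nhds_unique h3 h5).symm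
  -- step 7: l is loxodromic, contradiction
  refine hmax.1.2.2 l hlH ⟨hord, α, q, hαq, ?_⟩
  ext z
  simp only [Set.mem_setOf_eq, Set.mem_insert_iff, Set.mem_singleton_iff]
  constructor
  · intro hz
    by_cases hzq : z = q
    · right; exact hzq
    · left
      have hzpow : ∀ m : ℕ, l ^ (m + 1) • z = z := by
        intro m
        induction m with
        | zero => rwa [pow_one]
        | succ m ih => rw [pow_succ', mul_smul, ih, hz]
      have ht := convseq_smul_tendsto hcp (show z ≠ ρ from hρq ▸ hzq)
      have he : (fun i => ((fun n : ℕ => l ^ (n + 1)) ∘ φ) i • z) = fun _ : ℕ => z :=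
        funext fun i => hzpow (φ i)
      rw [he] at ht
      exact (tendsto_nhds_unique ht tendsto_const_nhds).symm
  · rintro (rfl | rfl)
    · exact hfixα
    · exact hfix l hlH

/-- … and repelling point `q` as well. -/
lemma lemB' (hY : IsMinimalNonElementary G Y) {H : Subgroup G} {q : Y}
    (hmax : IsMaxParabolic G Y H) (hfix : ∀ h ∈ H, h • q = q)
    {g : ℕ → G} (hg : ∀ n, g n ∈ H) {r a : Y} (hc : IsConvSeq G Y g r a) : r = q :=
  lemB hY hmax hfix (fun n => inv_mem (hg n)) (convseq_inv hc)

end KeyB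

section KeyC
variable {G : Type} [Group G] {X Y : Type}
  [MetricSpace X] [CompactSpace X] [MetricSpace Y] [CompactSpace Y]
  [MulAction G X] [MulAction G Y]

lemma aux_surj (hXc : IsConvergenceAction G X) (hYmin : IsMinimalAction G Y)
    {π : X → Y} (hπ : Continuous π) (heq : ∀ (g : G) (x : X), π (g • x) = g • π x) :
    Function.Surjective π := by
  haveI := hXc.1
  obtain ⟨x₀⟩ : Nonempty X := inferInstance
  have hrange : IsClosed (Set.range π) := (isCompact_range hπ).isClosed
  intro y
  have hsub : {z : Y | ∃ g : G, z = g • π x₀} ⊆ Set.range π := by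
    rintro z ⟨g, rfl⟩
    exact ⟨g • x₀, heq g x₀⟩
  have hcl : closure {z : Y | ∃ g : G, z = g • π x₀} ⊆ Set.range π :=
    hrange.closure_subset_iff.2 hsub
  exact hcl (hYmin (π x₀) y)

/-- The image under π of either limit point of an X-convergence sequence in H is q. -/
lemma lemC (hX : IsMinimalNonElementary G X) (hY : IsMinimalNonElementary G Y)
    {π : X → Y} (hπ : Continuous π) (heq : ∀ (g : G) (x : X), π (g • x) = g • π x)
    {H : Subgroup G} {q : Y}
    (hmax : IsMaxParabolic G Y H) (hfix : ∀ h ∈ H, h • q = q)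
    {g : ℕ → G} (hg : ∀ n, g n ∈ H) {r a : X} (hc : IsConvSeq G X g r a) :
    π a = q ∧ π r = q := by
  haveI : Infinite Y := hY.1.1
  have hsurj : Function.Surjective π := aux_surj hX.1 hY.2.1 hπ heq
  obtain ⟨φ, r', a', hφ, hc'⟩ := hY.1.2.2 g hc.1
  have ha' : a' = q := lemB hY hmax hfix (fun i => hg (φ i)) hc'
  have hr' : r' = q := lemB' hY hmax hfix (fun i => hg (φ i)) hc'
  have hxex : ∀ w : X, ∃ x : X, x ≠ w ∧ π x ≠ q := by
    intro w
    by_contra hcon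
    push_neg at hcon
    have hransub : Set.range π ⊆ {q, π w} := by
      rintro y ⟨x, rfl⟩
      by_cases hxw : x = w
      · subst hxw; exact Set.mem_insert_of_mem _ rfl
      · rw [hcon x hxw]; exact Set.mem_insert _ _
    have huniv : (Set.univ : Set Y) ⊆ {q, π w} := by
      intro y _
      obtain ⟨x, rfl⟩ := hsurj y
      exact hransub ⟨x, rfl⟩
    exact Set.infinite_univ (((Set.finite_singleton (π w)).insert q).subset huniv)
  constructor
  · obtain ⟨x, hxr, hxq⟩ := hxex r
    have t1 : Tendsto (fun n => g n • x) atTop (𝓝 a) := convseq_smul_tendsto hc hxr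
    have t1' : Tendsto (fun i => g (φ i) • x) atTop (𝓝 a) := t1.comp hφ.tendsto_atTop
    have t2 : Tendsto (fun i => π (g (φ i) • x)) atTop (𝓝 (π a)) :=
      ((hπ.tendsto a).comp t1')
    simp only [heq] at t2
    have t3 : Tendsto (fun i => (g ∘ φ) i • π x) atTop (𝓝 a') :=
      convseq_smul_tendsto hc' (by rw [hr']; exact hxq)
    rw [ha'] at t3
    exact tendsto_nhds_unique t2 t3
  · obtain ⟨x, hxa, hxq⟩ := hxex a
    have t1 : Tendsto (fun n => (g n)⁻¹ • x) atTop (𝓝 r) :=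
      convseq_smul_tendsto (convseq_inv hc) hxa
    have t1' : Tendsto (fun i => (g (φ i))⁻¹ • x) atTop (𝓝 r) := t1.comp hφ.tendsto_atTop
    have t2 : Tendsto (fun i => π ((g (φ i))⁻¹ • x)) atTop (𝓝 (π r)) :=
      ((hπ.tendsto r).comp t1')
    simp only [heq] at t2
    have t3 : Tendsto (fun i => ((g ∘ φ) i)⁻¹ • π x) atTop (𝓝 r') :=
      convseq_smul_tendsto (convseq_inv hc') (by rw [ha']; exact hxq)
    rw [hr'] at t3
    exact tendsto_nhds_unique t2 t3

end KeyC

/-- the preimage of a bounded parabolic point `q` with maximal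
parabolic subgroup `H` equals the limit set of the induced action of `H` on `X`. -/
theorem stmt3 {G : Type} [Group G] [Countable G] {X Y : Type}
    [MetricSpace X] [CompactSpace X] [MetricSpace Y] [CompactSpace Y]
    [MulAction G X] [MulAction G Y]
    (hX : IsMinimalNonElementary G X) (hY : IsMinimalNonElementary G Y)
    (π : X → Y) (hπ : Continuous π)
    (heq : ∀ (g : G) (x : X), π (g • x) = g • π x)
    (q : Y) (H : Subgroup G)
    (hmax : IsMaxParabolic G Y H)
    (hfix : ∀ h ∈ H, h • q = q)
    (hbdd : ∃ K : Set Y, IsCompact K ∧ K ⊆ {q}ᶜ ∧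
      (⋃ h ∈ H, (fun y => h • y) '' K) = {q}ᶜ) :
    π ⁻¹' {q} = limitSetOf G X H := by

  haveI : Infinite Y := hY.1.1
  have hsurj : Function.Surjective π := aux_surj hX.1 hY.2.1 hπ heq
  obtain ⟨K, hKc, hKq, hKcov⟩ := hbdd
  apply Set.Subset.antisymm
  · -- hard direction: π⁻¹{q} ⊆ Λ(H, X)
    intro p hp
    have hpq : π p = q := hp
    -- the preimage of q has empty interior, so p is a limit of points outside it
    have hcl : p ∈ closure (π ⁻¹' {q})ᶜ := by
      by_contra hccl
      rw [mem_closure_iff] at hccl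
      push_neg at hccl
      obtain ⟨O, hOopen, hpO, hOint⟩ := hccl
      have hOM : O ⊆ π ⁻¹' {q} := by
        intro z hz
        by_contra hzM
        exact absurd (Set.mem_inter hz hzM) (hOint ▸ Set.notMem_empty z)
      obtain ⟨F, hF⟩ := aux_cover hX.2.1 hX.1.2.1 hOopen ⟨p, hpO⟩
      have hsub : (Set.univ : Set Y) ⊆ (fun g : G => g⁻¹ • q) '' (F : Set G) := by
        intro y _
        obtain ⟨z, rfl⟩ := hsurj y
        obtain ⟨g, hgF, hgz⟩ := hF z
        have hq2 : π (g • z) = q := hOM hgz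
        rw [heq] at hq2
        exact ⟨g, hgF, by simp only [← hq2, inv_smul_smul]⟩
      exact Set.infinite_univ ((F.finite_toSet.image _).subset hsub)
    obtain ⟨x, hxM, hxp⟩ := mem_closure_iff_seq_limit.1 hcl
    -- decompose each x n as h n • k n with h n ∈ H, k n ∈ π⁻¹ K
    have hdec : ∀ n, ∃ (hh : G) (kk : X), hh ∈ H ∧ kk ∈ π ⁻¹' K ∧ x n = hh • kk := by
      intro n
      have hxq : π (x n) ≠ q := fun hq => hxM n (by simp [Set.mem_preimage, hq])
      have hmem : π (x n) ∈ ({q}ᶜ : Set Y) := hxq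
      rw [← hKcov] at hmem
      obtain ⟨hh, hhH, hmem2⟩ := Set.mem_iUnion₂.1 hmem
      obtain ⟨y, hyK, hy⟩ := hmem2
      refine ⟨hh, hh⁻¹ • x n, hhH, ?_, (smul_inv_smul hh (x n)).symm⟩
      have h2 : π (hh⁻¹ • x n) = hh⁻¹ • π (x n) := heq _ _
      rw [Set.mem_preimage, h2, ← hy]
      simpa [inv_smul_smul] using hyK
    choose h k hH hkK hxeq using hdec
    have hK'cl : IsClosed (π ⁻¹' K) := hKc.isClosed.preimage hπ
    have hK'c : IsCompact (π ⁻¹' K) := hK'cl.isCompact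
    -- the sequence h takes infinitely many values
    have hri : (Set.range h).Infinite := by
      by_contra hfin
      rw [Set.not_infinite] at hfin
      haveI := hfin.to_subtype
      obtain ⟨b, hb⟩ := Finite.exists_infinite_fiber
        (fun n : ℕ => (⟨h n, Set.mem_range_self n⟩ : Set.range h))
      have hSinf : ((fun n : ℕ => (⟨h n, Set.mem_range_self n⟩ : Set.range h)) ⁻¹' {b}).Infinite :=
        Set.infinite_coe_iff.1 hb
      set σ := hSinf.natEmbedding with hσdef
      have hjinj : Function.Injective (fun n => ((σ n : ℕ))) :=
        fun n m hnm => σ.injective (Subtype.ext hnm)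
      have hjat : Tendsto (fun n => ((σ n : ℕ))) atTop atTop := by
        rw [← Nat.cofinite_eq_atTop]; exact hjinj.tendsto_cofinite
      have hhj : ∀ n, h ((σ n : ℕ)) = (b : G) := by
        intro n
        have h2 := (σ n).2
        simp only [Set.mem_preimage, Set.mem_singleton_iff] at h2
        exact congrArg Subtype.val h2
      have hbH : (b : G) ∈ H := by
        obtain ⟨i0, hi0⟩ := b.2
        rw [← hi0]; exact hH i0
      have hxj : Tendsto (fun n => x ((σ n : ℕ))) atTop (𝓝 p) := hxp.comp hjat
      have hkj : Tendsto (fun n => k ((σ n : ℕ))) atTop (𝓝 ((b : G)⁻¹ • p)) := by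
        have hcont := ((hX.1.2.1 ((b : G)⁻¹)).tendsto p).comp hxj
        have he : (fun n => k ((σ n : ℕ))) = fun n => (b : G)⁻¹ • x ((σ n : ℕ)) := by
          funext n
          rw [hxeq ((σ n : ℕ)), hhj n, inv_smul_smul]
        rw [he]
        exact hcont
      have hkmem : (b : G)⁻¹ • p ∈ π ⁻¹' K :=
        hK'cl.mem_of_tendsto hkj (Filter.Eventually.of_forall fun n => hkK _)
      have hπq : π ((b : G)⁻¹ • p) = q := by
        rw [heq, hpq]
        exact hfix _ (inv_mem hbH)
      exact (hKq hkmem) hπq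
    -- injective subsequence of h
    set σ2 := hri.natEmbedding with hσ2def
    have hψex : ∀ n, ∃ i, h i = (σ2 n : G) := fun n => (σ2 n).2
    choose ψ hψ using hψex
    have hcompinj : Function.Injective (h ∘ ψ) := by
      intro n m hnm
      have h2 : (σ2 n : G) = (σ2 m : G) := by
        rw [← hψ n, ← hψ m]; exact hnm
      exact σ2.injective (Subtype.ext h2)
    have hψinj : Function.Injective ψ := fun n m hnm => hcompinj (congrArg h hnm)
    have hψat : Tendsto ψ atTop atTop := by
      rw [← Nat.cofinite_eq_atTop]
      exact hψinj.tendsto_cofinite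
    obtain ⟨φ, r, a, hφ, hcs⟩ := hX.1.2.2 (h ∘ ψ) hcompinj
    have hmemH : ∀ i, ((h ∘ ψ) ∘ φ) i ∈ H := fun i => hH _
    obtain ⟨hπa, hπr⟩ := lemC hX hY hπ heq hmax hfix hmemH hcs
    -- extract a convergent subsequence of the k's
    have hκmem : ∀ jj : ℕ, k (ψ (φ jj)) ∈ π ⁻¹' K := fun jj => hkK _
    obtain ⟨kl, hkl, τ, hτ, hκτ⟩ := hK'c.tendsto_subseq hκmem
    have hklr : kl ≠ r := by
      intro hh
      have h2 : π kl ∈ K := hkl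
      have h3 : π kl = q := by rw [hh, hπr]
      exact (hKq h2) h3
    have hd : 0 < dist kl r := dist_pos.2 hklr
    have hrC : r ∉ Metric.closedBall kl (dist kl r / 2) := by
      intro hr
      have h2 := Metric.mem_closedBall.1 hr
      rw [dist_comm] at h2
      linarith
    have huc := hcs.2.1 (Metric.closedBall kl (dist kl r / 2))
      Metric.isClosed_closedBall.isCompact hrC
    rw [Metric.tendstoUniformlyOn_iff] at huc
    have hxτ : Tendsto (fun jj => x (ψ (φ (τ jj)))) atTop (𝓝 p) :=
      hxp.comp (hψat.comp (hφ.tendsto_atTop.comp hτ.tendsto_atTop))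
    have hxa : Tendsto (fun jj => x (ψ (φ (τ jj)))) atTop (𝓝 a) := by
      rw [Metric.tendsto_atTop]
      intro ε hε
      have h2 : ∀ᶠ jj in atTop, ∀ z ∈ Metric.closedBall kl (dist kl r / 2),
          dist a (((h ∘ ψ) ∘ φ) (τ jj) • z) < ε := hτ.tendsto_atTop.eventually (huc ε hε)
      have h3 : ∀ᶠ jj in atTop, k (ψ (φ (τ jj))) ∈ Metric.closedBall kl (dist kl r / 2) :=
        (Filter.tendsto_def.1 hκτ) _ (Metric.closedBall_mem_nhds kl (by linarith))
      obtain ⟨N, hN⟩ := Filter.eventually_atTop.1 (h2.and h3)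
      refine ⟨N, fun n hn => ?_⟩
      obtain ⟨ha1, ha2⟩ := hN n hn
      have h4 := ha1 _ ha2
      have hre : x (ψ (φ (τ n))) = ((h ∘ ψ) ∘ φ) (τ n) • k (ψ (φ (τ n))) := hxeq _
      rw [dist_comm, hre]
      exact h4
    have hpa : p = a := tendsto_nhds_unique hxτ hxa
    exact ⟨(h ∘ ψ) ∘ φ, r, a, hmemH, hcs, Or.inr hpa⟩
  · -- easy direction: Λ(H, X) ⊆ π⁻¹{q}
    intro p hp
    obtain ⟨g, r, a, hmem, hcs, hpa⟩ := hp
    obtain ⟨hπa, hπr⟩ := lemC hX hY hπ heq hmax hfix hmem hcs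
    rcases hpa with rfl | rfl
    · exact hπr
    · exact hπa
end

section
/- Let G be a countable group with a minimal non-elementary convergence action on a compact metrizable space X, and let π : X → Y be a G-equivariant continuous map to another compact metrizable space with a minimal non-elementary convergence action. Then every maximal parabolic subgroup of G with respect to X is contained in a parabolic subgroup with respect to Y; that is, 𝓗(X) → 𝓗(Y), where 𝓗 denotes the set of maximal parabolic subgroups. -/
open Filter Topology Pointwise

section Aux

variable {G : Type} [Group G]

/-- Points fixed by `h` are fixed by all powers of `h`. -/
lemma aux_pow_fix {Z : Type} [UniformSpace Z] [MulAction G Z] {h : G} {z : Z}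
    (hz : h • z = z) (n : ℕ) : h ^ n • z = z := by
  induction n with
  | zero => simp
  | succ n ih => rw [pow_succ, mul_smul, hz, ih]

/-- A point fixed by all entries of a convergence sequence is the repelling or the
attracting point. -/
lemma aux_conv_fix {Z : Type} [UniformSpace Z] [T2Space Z] [MulAction G Z]
    {g : ℕ → G} {r a z : Z} (hc : IsConvSeq G Z g r a)
    (hz : ∀ n, g n • z = z) : z = r ∨ z = a := by
  by_cases hzr : z = r
  · exact Or.inl hzr
  · right
    have h1 : TendstoUniformlyOn (fun n x => g n • x) (fun _ => a) atTop {z} :=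
      hc.2.1 {z} isCompact_singleton (by simpa using fun h => hzr h.symm)
    have h2 : Tendsto (fun n => g n • z) atTop (nhds a) :=
      h1.tendsto_at (Set.mem_singleton z)
    have h3 : Tendsto (fun _ : ℕ => z) atTop (nhds a) := by
      simpa [hz] using h2
    exact (tendsto_nhds_unique tendsto_const_nhds h3)

/-- In a convergence action, an infinite-order element fixing two distinct points is
loxodromic. -/
lemma aux_lox {Z : Type} [UniformSpace Z] [T2Space Z] [MulAction G Z]
    (hconv : IsConvergenceAction G Z) {h : G} (hord : ¬ IsOfFinOrder h)
    {q1 q2 : Z} (hne : q1 ≠ q2) (h1 : h • q1 = q1) (h2 : h • q2 = q2) :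
    IsLoxodromic G Z h := by
  have hinj : Function.Injective fun n : ℕ => h ^ n :=
    injective_pow_iff_not_isOfFinOrder.mpr hord
  obtain ⟨φ, r, a, hφ, hc⟩ := hconv.2.2 _ hinj
  have key : ∀ z : Z, h • z = z → z = r ∨ z = a := by
    intro z hz
    exact aux_conv_fix hc (fun n => aux_pow_fix hz (φ n))
  refine ⟨hord, q1, q2, hne, ?_⟩
  have hq1 := key q1 h1
  have hq2 := key q2 h2
  ext z
  simp only [Set.mem_setOf_eq, Set.mem_insert_iff, Set.mem_singleton_iff]
  constructor
  · intro hz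
    rcases key z hz with rfl | rfl
    · rcases hq1 with rfl | rfl
      · exact Or.inl rfl
      · rcases hq2 with h' | rfl
        · exact Or.inr h'.symm
        · exact absurd rfl hne
    · rcases hq1 with h' | rfl
      · rcases hq2 with h'' | h''
        · exact absurd (h''.trans h'.symm) (Ne.symm hne)
        · exact Or.inr h''.symm
      · exact Or.inl rfl
  · rintro (rfl | rfl)
    · exact h1
    · exact h2

/-- In a convergence action on a compact metric space, if an injective sequence of
group elements all fix two distinct points, then some entry is loxodromic. -/
lemma aux_two_fix {Z : Type} [MetricSpace Z] [CompactSpace Z] [MulAction G Z]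
    (hconv : IsConvergenceAction G Z) {k : ℕ → G} (hinj : Function.Injective k)
    {q1 q2 : Z} (hne : q1 ≠ q2) (h1 : ∀ n, k n • q1 = q1) (h2 : ∀ n, k n • q2 = q2) :
    ∃ m, IsLoxodromic G Z (k m) := by
  obtain ⟨φ, r, a, hφ, hc⟩ := hconv.2.2 _ hinj
  have hq1 : q1 = r ∨ q1 = a := aux_conv_fix hc (fun n => h1 (φ n))
  have hq2 : q2 = r ∨ q2 = a := aux_conv_fix hc (fun n => h2 (φ n))
  -- all k n fix r and a, and r ≠ a
  have hra : r ≠ a ∧ (∀ n, k n • r = r) ∧ (∀ n, k n • a = a) := by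
    rcases hq1 with rfl | rfl <;> rcases hq2 with h' | h'
    · exact absurd h'.symm hne
    · subst h'; exact ⟨hne, h1, h2⟩
    · subst h'; exact ⟨Ne.symm hne, h2, h1⟩
    · exact absurd h'.symm hne
  obtain ⟨hrna, hfr, hfa⟩ := hra
  have : Infinite Z := hconv.1
  obtain ⟨q3, hq3⟩ := (Set.toFinite ({r, a} : Set Z)).infinite_compl.nonempty
  have hq3r : q3 ≠ r := fun h => hq3 (by simp [h])
  have hq3a : q3 ≠ a := fun h => hq3 (by simp [h])
  set ε : ℝ := min (dist r a / 2) (min (dist q3 r) (dist q3 a)) with hε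
  have hεpos : 0 < ε := by
    apply lt_min
    · have := dist_pos.mpr hrna
      linarith
    · exact lt_min (dist_pos.mpr hq3r) (dist_pos.mpr hq3a)
  -- the complement of the ε-ball around r is compact and misses r
  have hKcomp : IsCompact ((Metric.ball r ε)ᶜ : Set Z) :=
    (Metric.isOpen_ball.isClosed_compl).isCompact
  have hrK : r ∉ ((Metric.ball r ε)ᶜ : Set Z) := by
    simp [Metric.mem_ball, hεpos]
  have huc := hc.2.1 _ hKcomp hrK
  rw [Metric.tendstoUniformlyOn_iff] at huc
  obtain ⟨n, hn⟩ := (huc ε hεpos).exists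
  set h : G := k (φ n) with hh
  -- h maps the complement of ball r ε into ball a ε
  have hmap : ∀ x : Z, x ∉ Metric.ball r ε → h • x ∈ Metric.ball a ε := by
    intro x hx
    have := hn x hx
    rw [Metric.mem_ball, dist_comm]
    exact this
  -- the two balls are disjoint
  have hdisj : ∀ x : Z, x ∈ Metric.ball a ε → x ∉ Metric.ball r ε := by
    intro x hxa hxr
    rw [Metric.mem_ball] at hxa hxr
    have h3 : dist r a ≤ dist r x + dist x a := dist_triangle r x a
    have h4 : dist x r < dist r a / 2 := lt_of_lt_of_le hxr (min_le_left _ _)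
    have h5 : dist x a < dist r a / 2 := lt_of_lt_of_le hxa (min_le_left _ _)
    rw [dist_comm r x] at h3
    linarith
  have hq3nr : q3 ∉ Metric.ball r ε := by
    rw [Metric.mem_ball]
    have : ε ≤ dist q3 r := le_trans (min_le_right _ _) (min_le_left _ _)
    linarith
  have hq3na : q3 ∉ Metric.ball a ε := by
    rw [Metric.mem_ball]
    have : ε ≤ dist q3 a := le_trans (min_le_right _ _) (min_le_right _ _)
    linarith
  -- iterates of h push q3 into ball a ε
  have hiter : ∀ m : ℕ, h ^ (m + 1) • q3 ∈ Metric.ball a ε := by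
    intro m
    induction m with
    | zero => simpa using hmap q3 hq3nr
    | succ m ih =>
      have : h ^ (m + 1) • q3 ∉ Metric.ball r ε := hdisj _ ih
      have := hmap _ this
      rwa [← mul_smul, ← pow_succ'] at this
  have hord : ¬ IsOfFinOrder h := by
    rw [isOfFinOrder_iff_pow_eq_one]
    rintro ⟨m, hm, hpow⟩
    obtain ⟨m', rfl⟩ : ∃ m', m = m' + 1 := ⟨m - 1, by omega⟩
    have := hiter m'
    rw [hpow] at this
    simp only [one_smul] at this
    exact hq3na this
  exact ⟨φ n, aux_lox hconv hord hrna (hfr (φ n)) (hfa (φ n))⟩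

/-- An element fixing a point of `X`, not loxodromic on `X`, is not loxodromic
on `Y`, given an equivariant continuous surjection `π : X → Y`. -/
lemma aux_not_lox_target {X Y : Type} [MetricSpace X] [CompactSpace X]
    [MetricSpace Y] [CompactSpace Y] [MulAction G X] [MulAction G Y]
    (hconvX : IsConvergenceAction G X)
    (π : X → Y) (hπ : Continuous π) (hsurj : Function.Surjective π)
    (heq : ∀ (g : G) (x : X), π (g • x) = g • π x)
    {h : G} {p : X} (hp : h • p = p) (hnl : ¬ IsLoxodromic G X h) :
    ¬ IsLoxodromic G Y h := by
  rintro ⟨hord, y1, y2, hne, hfix⟩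
  have : Infinite X := hconvX.1
  have hcont : ∀ g : G, Continuous fun x : X => g • x := hconvX.2.1
  have hinj : Function.Injective fun n : ℕ => h ^ n :=
    injective_pow_iff_not_isOfFinOrder.mpr hord
  obtain ⟨φ, r, a, hφ, hc⟩ := hconvX.2.2 _ hinj
  have key : ∀ z : X, h • z = z → z = r ∨ z = a := by
    intro z hz
    exact aux_conv_fix hc (fun n => aux_pow_fix hz (φ n))
  by_cases hra : r = a
  · -- case r = a: use a fiber of π over a fixed point of h in Y away from π p
    have hpr : p = r := by
      rcases key p hp with h' | h'
      · exact h'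
      · rw [h', hra]
    have hpa : p = a := hpr.trans hra
    -- π p is a fixed point of h on Y
    have hπp : π p ∈ ({y1, y2} : Set Y) := by
      rw [← hfix]
      show h • π p = π p
      rw [← heq, hp]
    -- pick the other fixed point
    obtain ⟨y, hyfix, hya⟩ : ∃ y : Y, h • y = y ∧ y ≠ π p := by
      rcases hπp with h' | h'
      · refine ⟨y2, ?_, by rw [h']; exact hne.symm⟩
        have : y2 ∈ ({y1, y2} : Set Y) := by simp
        rw [← hfix] at this; exact this
      · rw [Set.mem_singleton_iff] at h'
        refine ⟨y1, ?_, by rw [h']; exact hne⟩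
        have : y1 ∈ ({y1, y2} : Set Y) := by simp
        rw [← hfix] at this; exact this
    set F : Set X := π ⁻¹' {y} with hF
    have hFclosed : IsClosed F := (isClosed_singleton).preimage hπ
    have hFcomp : IsCompact F := hFclosed.isCompact
    have hpF : p ∉ F := by
      intro hmem
      exact hya (Set.mem_preimage.mp hmem).symm
    have hrF : r ∉ F := hpr ▸ hpF
    obtain ⟨x0, hx0⟩ := hsurj y
    have hx0F : x0 ∈ F := by simp [hF, hx0]
    have hFinv : ∀ n : ℕ, h ^ n • x0 ∈ F := by
      intro n
      show π (h ^ n • x0) ∈ ({y} : Set Y)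
      rw [heq, hx0, aux_pow_fix hyfix]
      simp
    have huc := hc.2.1 F hFcomp hrF
    have htend : Tendsto (fun n => ((fun n : ℕ => h ^ n) ∘ φ) n • x0) atTop (nhds a) :=
      huc.tendsto_at hx0F
    have : a ∈ F :=
      hFclosed.mem_of_tendsto htend (Filter.Eventually.of_forall fun n => hFinv (φ n))
    exact hpF (hpa ▸ this)
  · -- case r ≠ a: h is loxodromic on X, contradiction
    apply hnl
    -- h fixes a
    have hfa : h • a = a := by
      obtain ⟨x, hx⟩ := (Set.toFinite ({r, h⁻¹ • r} : Set X)).infinite_compl.nonempty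
      have hxr : x ≠ r := fun h' => hx (by simp [h'])
      have hhxr : h • x ≠ r := by
        intro h'
        exact hx (by simp [eq_inv_smul_iff.mpr h'])
      have t1 : Tendsto (fun n => ((fun n : ℕ => h ^ n) ∘ φ) n • x) atTop (nhds a) :=
        (hc.2.1 {x} isCompact_singleton (by simpa using fun h' => hxr h'.symm)).tendsto_at
          (Set.mem_singleton x)
      have t2 : Tendsto (fun n => ((fun n : ℕ => h ^ n) ∘ φ) n • (h • x)) atTop (nhds a) :=
        (hc.2.1 {h • x} isCompact_singleton
          (by simpa using fun h' => hhxr h'.symm)).tendsto_at (Set.mem_singleton _)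
      have t3 : Tendsto (fun n => h • (((fun n : ℕ => h ^ n) ∘ φ) n • x)) atTop
          (nhds (h • a)) := (((hcont h).tendsto a).comp t1)
      have t4 : (fun n => ((fun n : ℕ => h ^ n) ∘ φ) n • (h • x)) =
          (fun n => h • (((fun n : ℕ => h ^ n) ∘ φ) n • x)) := by
        funext n
        simp only [Function.comp_apply, ← mul_smul]
        rw [← pow_succ, ← pow_succ']
      rw [t4] at t2
      exact (tendsto_nhds_unique t2 t3).symm
    -- h fixes r
    have hfr : h • r = r := by
      obtain ⟨x, hx⟩ := (Set.toFinite ({a, h⁻¹ • a} : Set X)).infinite_compl.nonempty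
      have hxa : x ≠ a := fun h' => hx (by simp [h'])
      have hhxa : h • x ≠ a := by
        intro h'
        exact hx (by simp [eq_inv_smul_iff.mpr h'])
      have t1 : Tendsto (fun n => (((fun n : ℕ => h ^ n) ∘ φ) n)⁻¹ • x) atTop (nhds r) :=
        (hc.2.2 {x} isCompact_singleton (by simpa using fun h' => hxa h'.symm)).tendsto_at
          (Set.mem_singleton x)
      have t2 : Tendsto (fun n => (((fun n : ℕ => h ^ n) ∘ φ) n)⁻¹ • (h • x)) atTop
          (nhds r) :=
        (hc.2.2 {h • x} isCompact_singleton
          (by simpa using fun h' => hhxa h'.symm)).tendsto_at (Set.mem_singleton _)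
      have t3 : Tendsto (fun n => h • ((((fun n : ℕ => h ^ n) ∘ φ) n)⁻¹ • x)) atTop
          (nhds (h • r)) := (((hcont h).tendsto r).comp t1)
      have t4 : (fun n => (((fun n : ℕ => h ^ n) ∘ φ) n)⁻¹ • (h • x)) =
          (fun n => h • ((((fun n : ℕ => h ^ n) ∘ φ) n)⁻¹ • x)) := by
        funext n
        simp only [Function.comp_apply, ← mul_smul]
        congr 1
        exact (((Commute.refl h).pow_right (φ n)).inv_right.eq).symm
      rw [t4] at t2
      exact (tendsto_nhds_unique t2 t3).symm
    refine ⟨hord, r, a, hra, ?_⟩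
    ext z
    simp only [Set.mem_setOf_eq, Set.mem_insert_iff, Set.mem_singleton_iff]
    constructor
    · intro hz; exact key z hz
    · rintro (rfl | rfl)
      · exact hfr
      · exact hfa

end Aux

/-- every maximal parabolic subgroup with respect to `X` is contained
in a parabolic subgroup with respect to `Y`, i.e. `𝓗(X) → 𝓗(Y)`. -/
theorem stmt4 {G : Type} [Group G] [Countable G] {X Y : Type}
    [MetricSpace X] [CompactSpace X] [MetricSpace Y] [CompactSpace Y]
    [MulAction G X] [MulAction G Y]
    (hX : IsMinimalNonElementary G X) (hY : IsMinimalNonElementary G Y)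
    (π : X → Y) (hπ : Continuous π)
    (heq : ∀ (g : G) (x : X), π (g • x) = g • π x) :
    ∀ K ∈ periph G X, ∃ H : Subgroup G, IsParabolicSubgroup G Y H ∧ K ≤ H := by
  intro K hK
  obtain ⟨⟨hKinf, ⟨p, hp, hpuniq⟩, hnolox⟩, _hmax⟩ := hK
  have hconvX := hX.1
  have hconvY := hY.1
  have : Infinite X := hconvX.1
  -- π is surjective, by minimality of the action on Y
  have hsurj : Function.Surjective π := by
    have hx0 : Nonempty X := inferInstance
    obtain ⟨x0⟩ := hx0
    have hdense : Dense {y : Y | ∃ g : G, y = g • (π x0)} := hY.2.1 (π x0)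
    have hsub : {y : Y | ∃ g : G, y = g • (π x0)} ⊆ Set.range π := by
      rintro y ⟨g, rfl⟩
      exact ⟨g • x0, heq g x0⟩
    have hclosed : IsClosed (Set.range π) := (isCompact_range hπ).isClosed
    have : Dense (Set.range π) := hdense.mono hsub
    rw [← Set.range_eq_univ (f := π)]
    rw [← hclosed.closure_eq]
    exact this.closure_eq
  -- no element of K is loxodromic on Y
  have hnoloxY : ∀ h ∈ K, ¬ IsLoxodromic G Y h := fun h hh =>
    aux_not_lox_target hconvX π hπ hsurj heq (hp h hh) (hnolox h hh)
  -- K fixes π p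
  have hfixq : ∀ h ∈ K, h • (π p) = π p := by
    intro h hh
    rw [← heq, hp h hh]
  -- uniqueness of the fixed point on Y
  have huniq : ∀ q' : Y, (∀ h ∈ K, h • q' = q') → q' = π p := by
    intro q' hq'
    by_contra hne
    -- injective sequence in K
    set e := hKinf.natEmbedding with he
    set k : ℕ → G := fun n => (e n : G) with hk
    have hkinj : Function.Injective k :=
      Subtype.val_injective.comp e.injective
    have hkK : ∀ n, k n ∈ K := fun n => (e n).2
    obtain ⟨m, hm⟩ := aux_two_fix hconvY hkinj hne
      (fun n => hq' _ (hkK n)) (fun n => hfixq _ (hkK n))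
    exact hnoloxY _ (hkK m) hm
  exact ⟨K, ⟨hKinf, ⟨π p, hfixq, huniq⟩, hnoloxY⟩, le_refl K⟩
end

section
/- Let G be a countable group acting on compact metrizable spaces Xᵢ (i in a nonempty countable index set I) by minimal non-elementary convergence actions, and suppose for each i there is a G-equivariant continuous map πᵢ : Z → Xᵢ from a compact metrizable space Z with a minimal non-elementary convergence action of G. Let Δ : G → ∏ᵢ (G ∪ Xᵢ) be the diagonal map into the product of the compactifications G ∪ Xᵢ, and define ⋀ᵢ Xᵢ := closure(Δ(G)) ∖ Δ(G). Then the image of the map ∏ᵢ πᵢ : Z → ∏ᵢ Xᵢ equals ⋀ᵢ Xᵢ. -/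
open Filter Topology Pointwise

/-- with `C i = G ∪ X i` the compactifications of `G` associated to
minimal non-elementary convergence actions (so `X i` is the complement of the
image of `G`), `D = G ∪ Z`, and `P i : D → C i` the continuous extensions of the
equivariant maps `π i : Z → X i`, the image of `Z = D ∖ eZ(G)` under `∏ πᵢ` equals
`⋀ᵢ Xᵢ = closure (Δ(G)) ∖ Δ(G)` where `Δ` is the diagonal map. -/
theorem stmt10 {G : Type} [Group G] [Countable G] {I : Type} [Countable I] [Nonempty I]
    (C : I → Type) [∀ i, MetricSpace (C i)] [∀ i, CompactSpace (C i)]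
    [∀ i, MulAction G (C i)]
    (e : ∀ i, G → C i)
    (he_dense : ∀ i, DenseRange (e i)) (he_inj : ∀ i, Function.Injective (e i))
    (he_eq : ∀ i (g h : G), e i (g * h) = g • e i h)
    (hCconv : ∀ i, IsConvergenceAction G (C i))
    (hClim : ∀ i, limitSet G (C i) = (Set.range (e i))ᶜ)
    (hCmin : ∀ i, ∀ x ∈ (Set.range (e i))ᶜ,
      (Set.range (e i))ᶜ ⊆ closure {y : C i | ∃ g : G, y = g • x})
    (hCinf : ∀ i, ((Set.range (e i))ᶜ : Set (C i)).Infinite)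
    (D : Type) [MetricSpace D] [CompactSpace D] [MulAction G D]
    (eZ : G → D) (heZ_dense : DenseRange eZ) (heZ_inj : Function.Injective eZ)
    (heZ_eq : ∀ g h : G, eZ (g * h) = g • eZ h)
    (hDconv : IsConvergenceAction G D)
    (hDlim : limitSet G D = (Set.range eZ)ᶜ)
    (hDmin : ∀ x ∈ (Set.range eZ)ᶜ,
      (Set.range eZ)ᶜ ⊆ closure {y : D | ∃ g : G, y = g • x})
    (hDinf : ((Set.range eZ)ᶜ : Set D).Infinite)
    (P : ∀ i, D → C i) (hPc : ∀ i, Continuous (P i))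
    (hPe : ∀ i (g : G), P i (eZ g) = e i g)
    (hPeq : ∀ i (g : G) (d : D), P i (g • d) = g • P i d)
    (hPX : ∀ d, d ∉ Set.range eZ → ∀ i, P i d ∉ Set.range (e i)) :
    (fun d => fun i => P i d) '' (Set.range eZ)ᶜ
      = closure (Set.range fun g => fun i => e i g)
          \ Set.range (fun g => fun i => e i g) := by
  classical
  set F : D → ∀ i, C i := fun d i => P i d with hF
  have hFc : Continuous F := continuous_pi fun i => hPc i
  have hFeZ : ∀ g, F (eZ g) = fun i => e i g := fun g => funext fun i => hPe i g
  have hclosed : IsClosed (Set.range F) := (isCompact_range hFc).isClosed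
  have hsub : closure (Set.range fun g i => e i g) ⊆ Set.range F := by
    apply closure_minimal _ hclosed
    rintro _ ⟨g, rfl⟩
    exact ⟨eZ g, hFeZ g⟩
  ext y
  constructor
  · rintro ⟨d, hd, rfl⟩
    constructor
    · have hdc : d ∈ closure (Set.range eZ) := by
        rw [heZ_dense.closure_range]; trivial
      have h1 : F d ∈ F '' closure (Set.range eZ) := ⟨d, hdc, rfl⟩
      have h2 : F d ∈ closure (F '' Set.range eZ) :=
        image_closure_subset_closure_image hFc h1
      have h3 : F '' Set.range eZ = Set.range fun g i => e i g := by
        rw [← Set.range_comp]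
        exact congrArg Set.range (funext hFeZ)
      rwa [h3] at h2
    · rintro ⟨g, hg⟩
      have i := Classical.arbitrary I
      exact hPX d hd i ⟨g, (congrFun hg.symm i).symm⟩
  · rintro ⟨hy1, hy2⟩
    obtain ⟨d, rfl⟩ := hsub hy1
    refine ⟨d, ?_, rfl⟩
    rintro ⟨g, rfl⟩
    exact hy2 ⟨g, (hFeZ g).symm⟩
end

section
/- Let G be a countable group and {Xᵢ}_{i∈I} a countable family of compact metrizable spaces with minimal non-elementary convergence actions of G, with G-equivariant continuous maps πᵢ : Z → Xᵢ from a common minimal non-elementary convergence action of G on Z. If Hᵢ ∈ 𝓗(Xᵢ) is a maximal parabolic subgroup for each i and ⋂_{i∈I} Hᵢ is infinite, then ⋂_{i∈I} Hᵢ is a parabolic subgroup of G with respect to the induced action on ⋀_{i∈I} Xᵢ (the image of ∏πᵢ), with parabolic fixed point (aᵢ)_{i∈I} where aᵢ is the parabolic point of Hᵢ. -/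
open Filter Topology Pointwise

/-- The image `⋀ᵢ Xᵢ` of the diagonal-type map `∏ πᵢ : Z → ∏ᵢ Xᵢ`. -/
def wedgeSet {I : Type} {X : I → Type} {Z : Type} (π : ∀ i, Z → X i) :
    Set (∀ i, X i) :=
  Set.range fun z => fun i => π i z

theorem wedgeSet_invariant {G : Type} [Group G] {I : Type} {X : I → Type}
    [∀ i, MulAction G (X i)] {Z : Type} [MulAction G Z] (π : ∀ i, Z → X i)
    (hπe : ∀ i (g : G) (z : Z), π i (g • z) = g • π i z) :
    ∀ (g : G), ∀ x ∈ wedgeSet π, g • x ∈ wedgeSet π := by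
  rintro g x ⟨z, hz⟩
  exact ⟨g • z, by funext i; simp [← hz, hπe]⟩

section Helpers

variable {G : Type} [Group G] {X : Type} [MetricSpace X] [CompactSpace X] [MulAction G X]

lemma IsConvSeq.subseq {g : ℕ → G} {r a : X} (hg : IsConvSeq G X g r a) {φ : ℕ → ℕ}
    (hφ : StrictMono φ) : IsConvSeq G X (g ∘ φ) r a := by
  obtain ⟨hinj, h1, h2⟩ := hg
  refine ⟨hinj.comp hφ.injective, ?_, ?_⟩
  · intro K hK hr u hu
    exact hφ.tendsto_atTop.eventually (h1 K hK hr u hu)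
  · intro K hK ha u hu
    exact hφ.tendsto_atTop.eventually (h2 K hK ha u hu)

lemma IsConvSeq.inv {g : ℕ → G} {r a : X} (hg : IsConvSeq G X g r a) :
    IsConvSeq G X (fun n => (g n)⁻¹) a r := by
  obtain ⟨hinj, h1, h2⟩ := hg
  refine ⟨fun m n hmn => hinj (by simpa using congrArg (·⁻¹) hmn), h2, ?_⟩
  simpa only [inv_inv] using h1

lemma IsConvSeq.tendsto {g : ℕ → G} {r a : X} (hg : IsConvSeq G X g r a) {x : X}
    (hx : x ≠ r) : Filter.Tendsto (fun n => g n • x) Filter.atTop (𝓝 a) :=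
  (hg.2.1 {x} isCompact_singleton (by simpa using Ne.symm hx)).tendsto_at rfl

lemma IsConvSeq.fixed_mem {g : ℕ → G} {r a : X} (hg : IsConvSeq G X g r a) {z : X}
    (hz : ∀ n, g n • z = z) : z = r ∨ z = a := by
  by_cases h : z = r
  · exact Or.inl h
  · refine Or.inr ?_
    have ht := hg.tendsto h
    simp only [hz] at ht
    exact tendsto_nhds_unique tendsto_const_nhds ht

lemma IsConvSeq.commute_fix [Infinite X] (hcont : ∀ g : G, Continuous fun x : X => g • x)
    {g : ℕ → G} {r a : X} (hg : IsConvSeq G X g r a) {h : G}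
    (hcomm : ∀ n, h * g n = g n * h) : h • a = a := by
  obtain ⟨w, hw⟩ := (Set.toFinite {r, h⁻¹ • r}).infinite_compl.nonempty
  simp only [Set.mem_compl_iff, Set.mem_insert_iff, Set.mem_singleton_iff, not_or] at hw
  have hw1 : w ≠ r := hw.1
  have hw2 : h • w ≠ r := fun hx => hw.2 (eq_inv_smul_iff.mpr hx)
  have key : ∀ n, g n • (h • w) = h • (g n • w) := fun n => by
    rw [smul_smul, smul_smul, ← hcomm n]
  have t1 : Filter.Tendsto (fun n => g n • (h • w)) Filter.atTop (𝓝 a) := hg.tendsto hw2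
  have t2 : Filter.Tendsto (fun n => h • (g n • w)) Filter.atTop (𝓝 (h • a)) :=
    ((hcont h).tendsto a).comp (hg.tendsto hw1)
  simp only [← key] at t2
  exact tendsto_nhds_unique t2 t1

lemma smul_pow_fixed {h : G} {z : X} (hz : h • z = z) : ∀ k : ℕ, h ^ k • z = z := by
  intro k
  induction k with
  | zero => simp
  | succ n ih => rw [pow_succ, mul_smul, hz, ih]

/-- An infinite-order non-loxodromic element with a fixed point `p` fixes only `p`. -/
lemma fix_unique [Infinite X] (hcont : ∀ g : G, Continuous fun x : X => g • x)
    (hconv : ∀ g : ℕ → G, Function.Injective g →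
      ∃ (φ : ℕ → ℕ) (r a : X), StrictMono φ ∧ IsConvSeq G X (g ∘ φ) r a)
    {h : G} (hfo : ¬ IsOfFinOrder h) (hnl : ¬ IsLoxodromic G X h)
    {p : X} (hp : h • p = p) : ∀ z : X, h • z = z → z = p := by
  have hinj : Function.Injective (fun n : ℕ => h ^ n) :=
    injective_pow_iff_not_isOfFinOrder.mpr hfo
  obtain ⟨θ, r, a, hθ, hseq⟩ := hconv _ hinj
  have hfa : h • a = a :=
    hseq.commute_fix hcont fun n => ((Commute.refl h).pow_right (θ n)).eq
  have hfr : h • r = r :=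
    hseq.inv.commute_fix hcont fun n => (((Commute.refl h).pow_right (θ n)).inv_right).eq
  have hsub : ∀ z : X, h • z = z → z = r ∨ z = a := by
    intro z hz
    exact hseq.fixed_mem fun n => smul_pow_fixed hz (θ n)
  have hra : r = a := by
    by_contra hne
    refine hnl ⟨hfo, r, a, hne, Set.ext fun z => ⟨fun hz => ?_, ?_⟩⟩
    · rcases hsub z hz with rfl | rfl
      · exact Or.inl rfl
      · exact Or.inr rfl
    · rintro (rfl | rfl)
      exacts [hfr, hfa]
  intro z hz
  rcases hsub z hz with rfl | rfl <;> rcases hsub p hp with rfl | rfl <;>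
    first | rfl | (exact hra) | (exact hra.symm)

/-- The attracting point of a convergence sequence inside a parabolic-type subgroup
equals the fixed point of the subgroup. -/
lemma parabolic_attracting [Infinite X] (hcont : ∀ g : G, Continuous fun x : X => g • x)
    (hconv : ∀ g : ℕ → G, Function.Injective g →
      ∃ (φ : ℕ → ℕ) (r a : X), StrictMono φ ∧ IsConvSeq G X (g ∘ φ) r a)
    {H : Subgroup G} {p : X} (hfixp : ∀ h ∈ H, h • p = p)
    (hnl : ∀ h ∈ H, ¬ IsLoxodromic G X h)
    {g : ℕ → G} (hgH : ∀ n, g n ∈ H) {r a : X} (hg : IsConvSeq G X g r a) :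
    a = p := by
  by_contra hap
  have hpr : p = r := by
    rcases hg.fixed_mem (fun n => hfixp _ (hgH n)) with h | h
    · exact h
    · exact absurd h.symm hap
  obtain ⟨y, hy⟩ := (Set.toFinite {a, p}).infinite_compl.nonempty
  simp only [Set.mem_compl_iff, Set.mem_insert_iff, Set.mem_singleton_iff, not_or] at hy
  have hya : y ≠ a := hy.1
  have hyp : y ≠ p := hy.2
  have hρ : 0 < dist a y := dist_pos.mpr (Ne.symm hya)
  have hdp : 0 < dist a p := dist_pos.mpr hap
  set ε : ℝ := min (dist a y) (dist a p) / 2 with hε_def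
  have hε : 0 < ε := by
    have := lt_min hρ hdp
    positivity
  have hερ : ε ≤ dist a y / 2 := by
    have := min_le_left (dist a y) (dist a p)
    simp only [hε_def]
    linarith
  have hεp : ε < dist a p := by
    have := min_le_right (dist a y) (dist a p)
    simp only [hε_def]
    linarith
  set U : Set X := Metric.closedBall a ε ∪ {y} with hU_def
  have hUc : IsClosed U := Metric.isClosed_closedBall.union isClosed_singleton
  have hUcomp : IsCompact U := hUc.isCompact
  have hpU : p ∉ U := by
    rintro (hmem | hmem)
    · rw [Metric.mem_closedBall, dist_comm] at hmem
      linarith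
    · exact hyp (Set.mem_singleton_iff.mp hmem).symm
  have hyU : y ∈ U := Or.inr rfl
  have huni := hg.2.1 U hUcomp (hpr ▸ hpU)
  rw [Metric.tendstoUniformlyOn_iff] at huni
  obtain ⟨N, hN⟩ := (huni (ε / 2) (by positivity)).exists
  set k : G := g N with hk_def
  have hiter : ∀ m : ℕ, ∀ x ∈ U, k ^ (m + 1) • x ∈ U ∧ dist a (k ^ (m + 1) • x) < ε / 2 := by
    intro m
    induction m with
    | zero =>
      intro x hx
      have h1 : dist a (k • x) < ε / 2 := by simpa using hN x hx
      refine ⟨Or.inl ?_, by simpa using h1⟩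
      rw [Metric.mem_closedBall, dist_comm]
      simpa using le_of_lt (lt_of_lt_of_le h1 (by linarith))
    | succ n ih =>
      intro x hx
      have hmem : k ^ (n + 1) • x ∈ U := (ih x hx).1
      have h1 : dist a (k • (k ^ (n + 1) • x)) < ε / 2 := hN _ hmem
      have heq : k ^ (n + 2) • x = k • (k ^ (n + 1) • x) := by
        rw [← mul_smul, ← pow_succ']
      refine ⟨Or.inl ?_, by rw [heq]; exact h1⟩
      rw [Metric.mem_closedBall, dist_comm, heq]
      exact le_of_lt (lt_of_lt_of_le h1 (by linarith))
  have hfo : ¬ IsOfFinOrder k := by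
    intro hf
    obtain ⟨m, hm, hkm⟩ := isOfFinOrder_iff_pow_eq_one.mp hf
    obtain ⟨m', rfl⟩ : ∃ m', m = m' + 1 := ⟨m - 1, by omega⟩
    have := (hiter m' y hyU).2
    rw [hkm, one_smul] at this
    linarith
  have hkH : k ∈ H := hgH N
  have hfix := fix_unique hcont hconv hfo (hnl _ hkH) (hfixp _ hkH)
  have hinj : Function.Injective (fun n : ℕ => k ^ n) :=
    injective_pow_iff_not_isOfFinOrder.mpr hfo
  obtain ⟨θ, r', a', hθ, hseq⟩ := hconv _ hinj
  have ha' : a' = p :=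
    hfix a' (hseq.commute_fix hcont fun n => ((Commute.refl k).pow_right (θ n)).eq)
  have hr' : r' = p :=
    hfix r' (hseq.inv.commute_fix hcont fun n => (((Commute.refl k).pow_right (θ n)).inv_right).eq)
  have hten : Filter.Tendsto (fun n => k ^ θ n • y) Filter.atTop (𝓝 p) := by
    have := hseq.tendsto (x := y) (by rw [hr']; exact hyp)
    rwa [ha'] at this
  have hin : ∀ᶠ n in Filter.atTop, k ^ θ n • y ∈ U := by
    filter_upwards [Filter.eventually_ge_atTop 1] with n hn
    obtain ⟨m, hm⟩ : ∃ m, θ n = m + 1 := ⟨θ n - 1, by have h1 : n ≤ θ n := hθ.le_apply; omega⟩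
    rw [hm]
    exact (hiter m y hyU).1
  exact hpU (hUc.mem_of_tendsto hten hin)

end Helpers


/-- if `Hᵢ ∈ 𝓗(Xᵢ)` are maximal parabolic subgroups with parabolic
points `aᵢ` and `⋂ᵢ Hᵢ` is infinite, then `(aᵢ)ᵢ` lies in `⋀ᵢ Xᵢ`, is fixed by
`⋂ᵢ Hᵢ`, and `⋂ᵢ Hᵢ` is a parabolic subgroup for the induced action on `⋀ᵢ Xᵢ`. -/
theorem stmt11 {G : Type} [Group G] [Countable G] {I : Type} [Countable I] [Nonempty I]
    (X : I → Type) [∀ i, MetricSpace (X i)] [∀ i, CompactSpace (X i)]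
    [∀ i, MulAction G (X i)]
    (hX : ∀ i, IsMinimalNonElementary G (X i))
    (Z : Type) [MetricSpace Z] [CompactSpace Z] [MulAction G Z]
    (hZ : IsMinimalNonElementary G Z)
    (π : ∀ i, Z → X i) (hπc : ∀ i, Continuous (π i))
    (hπe : ∀ i (g : G) (z : Z), π i (g • z) = g • π i z)
    (H : ∀ i, Subgroup G) (hH : ∀ i, IsMaxParabolic G (X i) (H i))
    (a : ∀ i, X i) (ha : ∀ i, ∀ h ∈ H i, h • a i = a i)
    (hinf : ((⨅ i, H i : Subgroup G) : Set G).Infinite) :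
    a ∈ wedgeSet π ∧
    (∀ h ∈ (⨅ i, H i : Subgroup G), ∀ i, h • a i = a i) ∧
    (@IsParabolicSubgroup G _ ↥(wedgeSet π)
      (invariantSubAction (wedgeSet π) (wedgeSet_invariant π hπe))
      (⨅ i, H i)) := by
  classical
  set K : Subgroup G := ⨅ i, H i with hK_def
  have hKle : ∀ i, K ≤ H i := fun i => iInf_le H i
  -- an injective sequence in K
  obtain e : ℕ ↪ (K : Set G) := hinf.natEmbedding
  set g : ℕ → G := fun n => (e n : G) with hg_def
  have hginj : Function.Injective g := fun m n hmn =>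
    e.injective (Subtype.ext hmn)
  have hgK : ∀ n, g n ∈ K := fun n => (e n).2
  obtain ⟨⟨hZinf, hZcont, hZsub⟩, hZmin, hZlim⟩ := hZ
  haveI := hZinf
  obtain ⟨φ, r, az, hφ, hZseq⟩ := hZsub g hginj
  -- per-coordinate facts
  have key : ∀ i : I, π i az = a i ∧ ∀ b : X i, (∀ n, g (φ n) • b = b) → b = a i := by
    intro i
    obtain ⟨⟨hXinf, hXcont, hXsub⟩, hXmin, hXlim⟩ := hX i
    haveI := hXinf
    obtain ⟨ψ, r', a', hψ, hXseq⟩ := hXsub (g ∘ φ) (hginj.comp hφ.injective)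
    have hmem : ∀ n, ((g ∘ φ) ∘ ψ) n ∈ H i := fun n => hKle i (hgK _)
    have hnl := (hH i).1.2.2
    have hfixa := ha i
    have ha' : a' = a i := parabolic_attracting hXcont hXsub hfixa hnl hmem hXseq
    have hr' : r' = a i := parabolic_attracting hXcont hXsub hfixa hnl
      (fun n => (H i).inv_mem (hmem n)) hXseq.inv
    -- surjectivity of π i
    have hπsurj : Function.Surjective (π i) := by
      obtain ⟨z0⟩ : Nonempty Z := inferInstance
      have hd : Dense {y : X i | ∃ g' : G, y = g' • (π i z0)} := hXmin _
      have hsubr : {y : X i | ∃ g' : G, y = g' • π i z0} ⊆ Set.range (π i) := by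
        rintro y ⟨g', rfl⟩
        exact ⟨g' • z0, hπe i g' z0⟩
      have hcl : IsClosed (Set.range (π i)) := (isCompact_range (hπc i)).isClosed
      rw [← Set.range_eq_univ, ← hcl.closure_eq]
      exact (hd.mono hsubr).closure_eq
    -- choose x ∈ Z with x ≠ r and π i x ≠ r'
    obtain ⟨y1, hy1⟩ := (Set.toFinite {r'}).infinite_compl.nonempty
    obtain ⟨y2, hy2⟩ := (Set.toFinite {r', y1}).infinite_compl.nonempty
    simp only [Set.mem_compl_iff, Set.mem_insert_iff, Set.mem_singleton_iff, not_or] at hy1 hy2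
    obtain ⟨x1, hx1⟩ := hπsurj y1
    obtain ⟨x2, hx2⟩ := hπsurj y2
    have hx : ∃ x : Z, x ≠ r ∧ π i x ≠ r' := by
      by_cases hcase : x1 = r
      · refine ⟨x2, fun hh => ?_, by rw [hx2]; exact hy2.1⟩
        rw [hh, ← hcase] at hx2
        exact hy2.2 (by rw [← hx1, hx2])
      · exact ⟨x1, hcase, by rw [hx1]; exact hy1⟩
    obtain ⟨x, hxr, hxr'⟩ := hx
    have hZsub2 : IsConvSeq G Z ((g ∘ φ) ∘ ψ) r az := hZseq.subseq hψ
    have t1 : Filter.Tendsto (fun n => ((g ∘ φ) ∘ ψ) n • x) Filter.atTop (𝓝 az) :=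
      hZsub2.tendsto hxr
    have t2 : Filter.Tendsto (fun n => π i (((g ∘ φ) ∘ ψ) n • x)) Filter.atTop (𝓝 (π i az)) :=
      ((hπc i).tendsto az).comp t1
    have t3 : Filter.Tendsto (fun n => ((g ∘ φ) ∘ ψ) n • (π i x)) Filter.atTop (𝓝 a') :=
      hXseq.tendsto hxr'
    have hπaz : π i az = a' := by
      refine tendsto_nhds_unique ?_ t3
      simpa only [hπe] using t2
    constructor
    · rw [hπaz, ha']
    · intro b hb
      have hb' : ∀ n, ((g ∘ φ) ∘ ψ) n • b = b := fun n => hb (ψ n)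
      rcases hXseq.fixed_mem hb' with rfl | rfl
      exacts [hr', ha']
  have haW : a ∈ wedgeSet π := ⟨az, funext fun i => (key i).1⟩
  have hfixK : ∀ h ∈ K, ∀ i, h • a i = a i := fun h hh i => ha i h (hKle i hh)
  letI : MulAction G ↥(wedgeSet π) :=
    invariantSubAction (wedgeSet π) (wedgeSet_invariant π hπe)
  refine ⟨haW, hfixK, hinf, ?_, ?_⟩
  · -- unique fixed point
    refine ⟨⟨a, haW⟩, fun h hh => Subtype.ext (funext fun i => hfixK h hh i), ?_⟩
    rintro ⟨w, hwW⟩ hw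
    refine Subtype.ext (funext fun i => ?_)
    refine (key i).2 (w i) fun n => ?_
    have := congrArg Subtype.val (hw (g (φ n)) (hgK (φ n)))
    exact congrFun this i
  · -- no loxodromic elements
    rintro h hh ⟨hfo, x, y, hxy, hset⟩
    have hfixw : ∀ w : ↥(wedgeSet π), h • w = w → w = ⟨a, haW⟩ := by
      intro w hw
      refine Subtype.ext (funext fun i => ?_)
      obtain ⟨⟨hXinf, hXcont, hXsub⟩, hXmin, hXlim⟩ := hX i
      haveI := hXinf
      refine fix_unique hXcont hXsub hfo ((hH i).1.2.2 h (hKle i hh))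
        (ha i h (hKle i hh)) _ ?_
      exact congrFun (congrArg Subtype.val hw) i
    have hx : h • x = x := by
      have : x ∈ ({x, y} : Set ↥(wedgeSet π)) := Or.inl rfl
      rw [← hset] at this
      exact this
    have hy : h • y = y := by
      have : y ∈ ({x, y} : Set ↥(wedgeSet π)) := Or.inr rfl
      rw [← hset] at this
      exact this
    exact hxy ((hfixw x hx).trans (hfixw y hy).symm)
end

section
/- Let G be a countable group and ({Xᵢ}_{i∈I}, {φ_{ij} : X_j → X_i}_{j>i}) a projective system over a nonempty countable directed set I, where each Xᵢ is a compact metrizable space with a minimal non-elementary convergence action of G and the bonding maps φ_{ij} are G-equivariant continuous surjections. If r = (rᵢ)_{i∈I} ∈ lim← Xᵢ is a conical limit point for the induced convergence action of G on the projective limit, then there exists i ∈ I such that rᵢ ∈ Xᵢ is a conical limit point. -/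
open Filter Topology Pointwise

/-- The projective limit, as the subset of the product of compatible threads. -/
def projLimitSet {I : Type} [Preorder I] (X : I → Type)
    (φ : ∀ i j, i ≤ j → X j → X i) : Set (∀ i, X i) :=
  {x | ∀ i j (h : i ≤ j), φ i j h (x j) = x i}

theorem projLimitSet_invariant {G : Type} [Group G] {I : Type} [Preorder I]
    {X : I → Type} [∀ i, MulAction G (X i)] (φ : ∀ i j, i ≤ j → X j → X i)
    (hφe : ∀ i j (h : i ≤ j) (g : G) (x : X j), φ i j h (g • x) = g • φ i j h x) :
    ∀ (g : G), ∀ x ∈ projLimitSet X φ, g • x ∈ projLimitSet X φ := by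
  intro g x hx i j h
  simpa [hφe] using congrArg (fun y => g • y) (hx i j h)

/-- if a point of the projective limit of a countable projective
system of minimal non-elementary convergence actions is a conical limit point for
the induced action, then some coordinate of it is a conical limit point. -/
theorem stmt12 {G : Type} [Group G] [Countable G] {I : Type} [Preorder I]
    [IsDirected I (· ≤ ·)] [Countable I] [Nonempty I]
    (X : I → Type) [∀ i, MetricSpace (X i)] [∀ i, CompactSpace (X i)]
    [∀ i, MulAction G (X i)]
    (hX : ∀ i, IsMinimalNonElementary G (X i))
    (φ : ∀ i j, i ≤ j → X j → X i)
    (hφc : ∀ i j (h : i ≤ j), Continuous (φ i j h))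
    (hφs : ∀ i j (h : i ≤ j), Function.Surjective (φ i j h))
    (hφe : ∀ i j (h : i ≤ j) (g : G) (x : X j), φ i j h (g • x) = g • φ i j h x)
    (hφid : ∀ i (h : i ≤ i), φ i i h = id)
    (hφcomp : ∀ i j k (hij : i ≤ j) (hjk : j ≤ k) (x : X k),
      φ i j hij (φ j k hjk x) = φ i k (hij.trans hjk) x)
    (hlim : @IsMinimalNonElementary G _ ↥(projLimitSet X φ) _
      (invariantSubAction (projLimitSet X φ) (projLimitSet_invariant φ hφe)))
    (r : ↥(projLimitSet X φ))
    (hr : @IsConicalLimitPoint G _ ↥(projLimitSet X φ) _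
      (invariantSubAction (projLimitSet X φ) (projLimitSet_invariant φ hφe)) r) :
    ∃ i, IsConicalLimitPoint G (X i) ((r : ∀ i, X i) i) := by
  letI A : MulAction G ↥(projLimitSet X φ) :=
    invariantSubAction (projLimitSet X φ) (projLimitSet_invariant φ hφe)
  obtain ⟨g, p, a, b, ⟨hinj, hfwd, hbwd⟩, htend, hba⟩ := hr
  obtain ⟨i₀, hi₀⟩ : ∃ i, (b : ∀ i, X i) i ≠ (a : ∀ i, X i) i := by
    by_contra h
    push_neg at h
    exact hba (Subtype.ext (funext h))
  have hSclosed : IsClosed (projLimitSet X φ) := by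
    have hrep : projLimitSet X φ
        = ⋂ (i) (j) (h : i ≤ j), {x : ∀ i, X i | φ i j h (x j) = x i} := by
      ext x
      simp only [projLimitSet, Set.mem_iInter, Set.mem_setOf_eq]
    rw [hrep]
    exact isClosed_iInter fun i => isClosed_iInter fun j => isClosed_iInter fun h =>
      isClosed_eq ((hφc i j h).comp (continuous_apply j)) (continuous_apply i)
  haveI : CompactSpace ↥(projLimitSet X φ) := isCompact_iff_compactSpace.mp hSclosed.isCompact
  set π : ↥(projLimitSet X φ) → X i₀ := fun y => (y : ∀ i, X i) i₀ with hπdef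
  have hπc : Continuous π := (continuous_apply i₀).comp continuous_subtype_val
  have hπu : UniformContinuous π :=
    (Pi.uniformContinuous_proj _ i₀).comp uniformContinuous_subtype_val
  have hπsmul : ∀ (h : G) (y : ↥(projLimitSet X φ)), π (h • y) = h • π y := fun _ _ => rfl
  -- surjectivity of the projection, via minimality of the action on `X i₀`
  have hπsurj : ∀ x : X i₀, ∃ y : ↥(projLimitSet X φ), π y = x := by
    have hTc : IsCompact (Set.range π) := isCompact_range hπc
    have hTcl : IsClosed (Set.range π) := hTc.isClosed
    have horb : {y : X i₀ | ∃ h : G, y = h • π r} ⊆ Set.range π := by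
      rintro y ⟨h, rfl⟩
      exact ⟨h • r, (hπsmul h r).symm ▸ rfl⟩
    have hdense := (hX i₀).2.1 (π r)
    intro x
    have hx : x ∈ closure {y : X i₀ | ∃ h : G, y = h • π r} :=
      hdense.closure_eq ▸ Set.mem_univ x
    exact (closure_minimal horb hTcl) hx
  refine ⟨i₀, g, π p, π a, π b, ⟨hinj, ?_, ?_⟩, ?_, hi₀⟩
  · intro K hK hpK
    have hK'c : IsCompact (π ⁻¹' K) := (hK.isClosed.preimage hπc).isCompact
    have hpK' : p ∉ π ⁻¹' K := fun h => hpK h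
    have H := hπu.comp_tendstoUniformlyOn (hfwd (π ⁻¹' K) hK'c hpK')
    intro u hu
    filter_upwards [H u hu] with n hn x hx
    obtain ⟨y, rfl⟩ := hπsurj x
    exact hn y hx
  · intro K hK haK
    have hK'c : IsCompact (π ⁻¹' K) := (hK.isClosed.preimage hπc).isCompact
    have haK' : a ∉ π ⁻¹' K := fun h => haK h
    have H := hπu.comp_tendstoUniformlyOn (hbwd (π ⁻¹' K) hK'c haK')
    intro u hu
    filter_upwards [H u hu] with n hn x hx
    obtain ⟨y, rfl⟩ := hπsurj x
    exact hn y hx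
  · exact (hπc.tendsto b).comp htend
end

section
/- Let G be a countable group with a convergence action on a compact metrizable space X, let H ≤ G be a subgroup and p ∈ X a point fixed by H. Suppose the preimage of p under a G-equivariant continuous map π : Z → X from another minimal non-elementary convergence action of G is the single point z (with π(z)=p and p a conical limit point, so π⁻¹(p)={z}). If every element of G of infinite order fixing p lies in H and H contains no loxodromic elements with respect to Z, then no loxodromic element of G with respect to X has p as a fixed point; hence if H is infinite, p is a parabolic point of X with parabolic subgroup H. -/
open Filter Topology Pointwise

section MyHelpers

variable {G : Type} [Group G]

lemma myConvSeq_comp {Y : Type} [UniformSpace Y] [MulAction G Y] {g : ℕ → G} {r a : Y}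
    (hg : IsConvSeq G Y g r a) {φ : ℕ → ℕ} (hφ : StrictMono φ) :
    IsConvSeq G Y (g ∘ φ) r a :=
  ⟨hg.1.comp hφ.injective,
   fun K hK hr u hu => hφ.tendsto_atTop.eventually (hg.2.1 K hK hr u hu),
   fun K hK ha u hu => hφ.tendsto_atTop.eventually (hg.2.2 K hK ha u hu)⟩

lemma myConvSeq_inv {Y : Type} [UniformSpace Y] [MulAction G Y] {g : ℕ → G} {r a : Y}
    (hg : IsConvSeq G Y g r a) : IsConvSeq G Y (fun n => (g n)⁻¹) a r := by
  refine ⟨fun m n h => hg.1 (inv_injective h), fun K hK ha => hg.2.2 K hK ha, fun K hK hr => ?_⟩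
  simpa only [inv_inv] using hg.2.1 K hK hr

lemma myConvSeq_tendsto {Y : Type} [MetricSpace Y] [MulAction G Y] {g : ℕ → G} {r a : Y}
    (hg : IsConvSeq G Y g r a) {x : Y} (hx : x ≠ r) :
    Tendsto (fun n => g n • x) atTop (nhds a) :=
  (hg.2.1 {x} isCompact_singleton (by simpa using Ne.symm hx)).tendsto_at rfl

lemma myConvSeq_fixed_mem {Y : Type} [MetricSpace Y] [MulAction G Y] {g : ℕ → G} {r a : Y}
    (hg : IsConvSeq G Y g r a) {w : Y} (hw : ∀ n, g n • w = w) : w = r ∨ w = a := by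
  rcases eq_or_ne w r with h | h
  · exact Or.inl h
  · right
    have h1 := myConvSeq_tendsto hg h
    simp only [hw] at h1
    exact tendsto_nhds_unique tendsto_const_nhds h1

lemma mySmul_pow_fixed {Y : Type} [MulAction G Y] {l : G} {x : Y} (h : l • x = x) :
    ∀ k : ℕ, l ^ k • x = x
  | 0 => by simp
  | (k + 1) => by rw [pow_succ, mul_smul, h, mySmul_pow_fixed h k]

lemma myCommute_fix_attr {Y : Type} [MetricSpace Y] [MulAction G Y]
    (hY : Infinite Y) (hcont : ∀ g : G, Continuous fun x : Y => g • x)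
    {g : ℕ → G} {r a : Y} (hg : IsConvSeq G Y g r a) {h : G}
    (hc : ∀ n, Commute (g n) h) : h • a = a := by
  haveI := hY
  obtain ⟨w, hw⟩ := (((Set.finite_singleton (h⁻¹ • r)).insert r).infinite_compl).nonempty
  simp only [Set.mem_compl_iff, Set.mem_insert_iff, Set.mem_singleton_iff, not_or] at hw
  have hw2 : h • w ≠ r := fun e => hw.2 (by rw [← e, inv_smul_smul])
  have t1 : Tendsto (fun n => g n • (h • w)) atTop (nhds a) := myConvSeq_tendsto hg hw2
  have t2 : Tendsto (fun n => h • (g n • w)) atTop (nhds (h • a)) :=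
    ((hcont h).tendsto a).comp (myConvSeq_tendsto hg hw.1)
  have e : (fun n => g n • (h • w)) = fun n => h • (g n • w) := by
    funext n; rw [smul_smul, smul_smul, (hc n).eq]
  rw [e] at t1
  exact tendsto_nhds_unique t2 t1

lemma myCommute_fix {Y : Type} [MetricSpace Y] [MulAction G Y]
    (hY : Infinite Y) (hcont : ∀ g : G, Continuous fun x : Y => g • x)
    {g : ℕ → G} {r a : Y} (hg : IsConvSeq G Y g r a) {h : G}
    (hc : ∀ n, Commute (g n) h) : h • a = a ∧ h • r = r :=
  ⟨myCommute_fix_attr hY hcont hg hc,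
   myCommute_fix_attr hY hcont (myConvSeq_inv hg) (fun n => (hc n).inv_left)⟩

lemma myNot_isOpen_singleton {Y : Type} [MetricSpace Y] [CompactSpace Y] [MulAction G Y]
    (hY : Infinite Y) (hcont : ∀ g : G, Continuous fun x : Y => g • x)
    (hmin : IsMinimalAction G Y) (w : Y) : ¬ IsOpen ({w} : Set Y) := by
  intro hop
  haveI := hY
  have hall : ∀ x : Y, IsOpen ({x} : Set Y) := by
    intro x
    obtain ⟨y, hy, hy'⟩ := (hmin x).exists_mem_open hop ⟨w, rfl⟩
    obtain ⟨g, hg⟩ := hy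
    rw [hg, Set.mem_singleton_iff] at hy'
    have he : ({x} : Set Y) = (fun u : Y => g • u) ⁻¹' {w} := by
      ext u
      simp only [Set.mem_singleton_iff, Set.mem_preimage, ← hy']
      exact ⟨fun e => by rw [e], fun e => smul_left_cancel g e⟩
    rw [he]
    exact hop.preimage (hcont g)
  haveI : DiscreteTopology Y := discreteTopology_iff_isOpen_singleton.2 hall
  exact not_finite_iff_infinite.2 ‹Infinite Y› finite_of_compact_of_discrete

lemma myMem_closure_compl {Y : Type} [MetricSpace Y] [CompactSpace Y] [MulAction G Y]
    (hY : Infinite Y) (hcont : ∀ g : G, Continuous fun x : Y => g • x)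
    (hmin : IsMinimalAction G Y) (w : Y) : w ∈ closure {y : Y | y ≠ w} := by
  rw [mem_closure_iff]
  intro o ho hw
  rcases (o ∩ {y : Y | y ≠ w}).eq_empty_or_nonempty with he | hne
  · exfalso
    apply myNot_isOpen_singleton hY hcont hmin w
    have hsing : o = {w} := by
      refine Set.eq_singleton_iff_unique_mem.2 ⟨hw, fun y hy => ?_⟩
      by_contra hy'
      exact Set.eq_empty_iff_forall_notMem.1 he y ⟨hy, hy'⟩
    rwa [← hsing]
  · exact hne

lemma myTransfer {X Z : Type} [MetricSpace X] [MetricSpace Z] [CompactSpace Z]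
    [MulAction G X] [MulAction G Z] (hZinf : Infinite Z)
    (hZcont : ∀ g : G, Continuous fun x : Z => g • x) (hZmin : IsMinimalAction G Z)
    (π : Z → X) (hπc : Continuous π) (hπe : ∀ (g : G) (u : Z), π (g • u) = g • π u)
    {p : X} {z : Z} (hz : π z = p) (hpre : π ⁻¹' {p} = {z})
    {g : ℕ → G} {rX aX : X} {rZ aZ : Z}
    (hgX : IsConvSeq G X g rX aX) (hgZ : IsConvSeq G Z g rZ aZ)
    (hzfix : ∀ n, g n • z = z) (hne : rX ≠ aX) : rZ ≠ aZ := by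
  haveI := hZinf
  intro heq
  have hzr : z = rZ := by
    rcases myConvSeq_fixed_mem hgZ hzfix with h | h
    · exact h
    · rw [h, heq]
  have haz : aZ = z := by rw [hzr, heq]
  have key : ∀ b : X, ∃ u : Z, u ≠ z ∧ π u ≠ b := by
    intro b
    by_contra hcon
    push_neg at hcon
    have hzb : π z = b := by
      have hsub : {y : Z | y ≠ z} ⊆ π ⁻¹' {b} := fun u hu => hcon u hu
      exact closure_minimal hsub (isClosed_singleton.preimage hπc)
        (myMem_closure_compl hZinf hZcont hZmin z)
    obtain ⟨u0, hu0⟩ := (Set.finite_singleton z).infinite_compl.nonempty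
    have hu0' : u0 ≠ z := hu0
    have hup : π u0 = p := by rw [hcon u0 hu0', ← hzb, hz]
    exact hu0' (by rwa [← Set.mem_singleton_iff, ← hpre])
  obtain ⟨w, hwz, hwr⟩ := key rX
  have t1 : Tendsto (fun n => g n • w) atTop (nhds aZ) :=
    myConvSeq_tendsto hgZ (by rw [← hzr]; exact hwz)
  have t1' : Tendsto (fun n => π (g n • w)) atTop (nhds p) := by
    have := (hπc.tendsto aZ).comp t1
    rwa [haz, hz] at this
  have t1'' : Tendsto (fun n => g n • π w) atTop (nhds p) := by
    simpa only [hπe] using t1'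
  have t2 : Tendsto (fun n => g n • π w) atTop (nhds aX) := myConvSeq_tendsto hgX hwr
  have haX : aX = p := tendsto_nhds_unique t2 t1''
  obtain ⟨w', hw'z⟩ := (Set.finite_singleton z).infinite_compl.nonempty
  have hw'z' : w' ≠ z := hw'z
  have hw'p : π w' ≠ aX := by
    rw [haX]
    intro e
    exact hw'z' (by rwa [← Set.mem_singleton_iff, ← hpre])
  have t3 : Tendsto (fun n => (g n)⁻¹ • w') atTop (nhds rZ) :=
    myConvSeq_tendsto (myConvSeq_inv hgZ) (by rw [haz]; exact hw'z')
  have t3' : Tendsto (fun n => π ((g n)⁻¹ • w')) atTop (nhds p) := by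
    have := (hπc.tendsto rZ).comp t3
    rwa [← hzr, hz] at this
  have t3'' : Tendsto (fun n => (g n)⁻¹ • π w') atTop (nhds p) := by
    simpa only [hπe] using t3'
  have t4 : Tendsto (fun n => (g n)⁻¹ • π w') atTop (nhds rX) :=
    myConvSeq_tendsto (myConvSeq_inv hgX) hw'p
  exact hne ((tendsto_nhds_unique t4 t3'').trans haX.symm)

lemma myLoxInH {Z : Type} [MetricSpace Z] [CompactSpace Z] [MulAction G Z]
    (hconv : IsConvergenceAction G Z) (hmin : IsMinimalAction G Z)
    (H : Subgroup G) {z aZ : Z} (hza : aZ ≠ z)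
    (hHz : ∀ h ∈ H, h • z = z)
    {t : ℕ → G} (ht : ∀ n, t n ∈ H) (htc : IsConvSeq G Z t z aZ) :
    ∃ h ∈ H, IsLoxodromic G Z h := by
  obtain ⟨hinf, hcont, hext⟩ := hconv
  haveI := hinf
  have hdist : (0 : ℝ) < dist aZ z := dist_pos.2 hza
  set δ : ℝ := dist aZ z / 2 with hδ
  have hδpos : 0 < δ := by positivity
  obtain ⟨y, hyball, hyne⟩ : ∃ y, y ∈ Metric.ball aZ δ ∧ y ≠ aZ := by
    by_contra hcon
    push_neg at hcon
    apply myNot_isOpen_singleton hinf hcont hmin aZ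
    have hb : Metric.ball aZ δ = {aZ} :=
      Set.eq_singleton_iff_unique_mem.2 ⟨Metric.mem_ball_self hδpos, fun y hy => hcon y hy⟩
    rw [← hb]
    exact Metric.isOpen_ball
  set ε : ℝ := dist y aZ with hε
  have hεpos : 0 < ε := dist_pos.2 hyne
  have hεδ : ε < δ := Metric.mem_ball.1 hyball
  set U : Set Z := Metric.closedBall aZ ε with hU
  have hyU : y ∈ U := Metric.mem_closedBall.2 (le_of_eq rfl)
  have hzU : z ∉ U := by
    simp only [hU, Metric.mem_closedBall, not_le]
    calc ε < δ := hεδ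
    _ < dist aZ z := by rw [hδ]; linarith
    _ = dist z aZ := dist_comm _ _
  have hUcomp : IsCompact U := Metric.isClosed_closedBall.isCompact
  have hunif := (Metric.tendstoUniformlyOn_iff.1 (htc.2.1 U hUcomp hzU)) (ε / 2) (by positivity)
  obtain ⟨N, hN⟩ := hunif.exists
  set h : G := t N with hh
  have hhH : h ∈ H := ht N
  have hstep : ∀ x ∈ U, h • x ∈ Metric.ball aZ (ε / 2) := fun x hx => by
    have := hN x hx
    rwa [Metric.mem_ball, dist_comm]
  have hballU : Metric.ball aZ (ε / 2) ⊆ U := fun x hx =>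
    Metric.mem_closedBall.2 (le_of_lt (lt_of_lt_of_le (Metric.mem_ball.1 hx) (by linarith)))
  have hpow : ∀ k : ℕ, ∀ x ∈ U, h ^ (k + 1) • x ∈ Metric.ball aZ (ε / 2) := by
    intro k
    induction k with
    | zero => intro x hx; simpa [pow_one] using hstep x hx
    | succ k ih =>
      intro x hx
      have h1 : h ^ (k + 1) • x ∈ U := hballU (ih x hx)
      have h2 : h ^ (k + 2) • x = h • (h ^ (k + 1) • x) := by
        rw [← mul_smul, ← pow_succ']
      rw [h2]
      exact hstep _ h1
  have hford : ¬ IsOfFinOrder h := by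
    intro hfin
    obtain ⟨m, hm, hm1⟩ := isOfFinOrder_iff_pow_eq_one.1 hfin
    have hmem := hpow (m - 1) y hyU
    rw [Nat.sub_add_cancel hm, hm1, one_smul] at hmem
    have hlt : dist y aZ < ε / 2 := Metric.mem_ball.1 hmem
    rw [← hε] at hlt
    linarith
  have hinj : Function.Injective (fun n : ℕ => h ^ n) :=
    injective_pow_iff_not_isOfFinOrder.2 hford
  obtain ⟨ψ, r', a', hψ, hcs⟩ := hext _ hinj
  have hzfix : ∀ n, ((fun n : ℕ => h ^ n) ∘ ψ) n • z = z :=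
    fun n => mySmul_pow_fixed (hHz h hhH) _
  have ha'U : a' ∈ U := by
    obtain ⟨w, hwU, hwr⟩ : ∃ w ∈ U, w ≠ r' := by
      rcases eq_or_ne y r' with h1 | h1
      · exact ⟨aZ, Metric.mem_closedBall_self hεpos.le, h1 ▸ Ne.symm hyne⟩
      · exact ⟨y, hyU, h1⟩
    have htw : Tendsto (fun n => h ^ ψ n • w) atTop (nhds a') := myConvSeq_tendsto hcs hwr
    refine Metric.isClosed_closedBall.mem_of_tendsto htw ?_
    filter_upwards [Filter.eventually_ge_atTop 1] with n hn
    have hψn : 1 ≤ ψ n := le_trans hn hψ.le_apply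
    have he : h ^ ψ n • w = h ^ (ψ n - 1 + 1) • w := by rw [Nat.sub_add_cancel hψn]
    rw [he]
    exact hballU (hpow (ψ n - 1) w hwU)
  have ha'z : a' ≠ z := fun e => hzU (e ▸ ha'U)
  have hzr' : z = r' := by
    rcases myConvSeq_fixed_mem hcs hzfix with e | e
    · exact e
    · exact absurd e.symm ha'z
  have hne' : r' ≠ a' := fun e => ha'z (hzr'.trans e).symm
  have hca := myCommute_fix hinf hcont hcs (fun n => (Commute.refl h).pow_left (ψ n))
  refine ⟨h, hhH, hford, r', a', hne', ?_⟩
  ext w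
  simp only [Set.mem_setOf_eq, Set.mem_insert_iff, Set.mem_singleton_iff]
  constructor
  · intro hw
    exact myConvSeq_fixed_mem hcs (fun n => mySmul_pow_fixed hw _)
  · rintro (rfl | rfl)
    · exact hca.2
    · exact hca.1

end MyHelpers

/-- key step of Lemma 2.4(5): under the stated hypotheses no
loxodromic element of `G` with respect to `X` fixes `p`; hence if `H` is infinite,
`p` is a parabolic point of `X` with parabolic subgroup `H`. -/
theorem stmt13 {G : Type} [Group G] [Countable G] {X Z : Type}
    [MetricSpace X] [CompactSpace X] [MetricSpace Z] [CompactSpace Z]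
    [MulAction G X] [MulAction G Z]
    (hX : IsConvergenceAction G X) (hZ : IsMinimalNonElementary G Z)
    (H : Subgroup G) (p : X) (hfix : ∀ h ∈ H, h • p = p)
    (π : Z → X) (hπc : Continuous π)
    (hπe : ∀ (g : G) (z : Z), π (g • z) = g • π z)
    (z : Z) (hz : π z = p)
    (hconical : IsConicalLimitPoint G X p)
    (hpre : π ⁻¹' {p} = {z})
    (hord : ∀ l : G, ¬ IsOfFinOrder l → l • p = p → l ∈ H)
    (hnolox : ∀ h ∈ H, ¬ IsLoxodromic G Z h) :
    (∀ l : G, IsLoxodromic G X l → l • p ≠ p) ∧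
    ((H : Set G).Infinite →
      IsParabolicSubgroup G X H ∧ ∀ h ∈ H, h • p = p) := by
  obtain ⟨hZconv, hZmin, hZlim⟩ := hZ
  obtain ⟨hZinf, hZcont, hZext⟩ := hZconv
  obtain ⟨hXinf, hXcont, hXext⟩ := hX
  have hHz : ∀ h ∈ H, h • z = z := by
    intro h hh
    have h1 : π (h • z) = p := by rw [hπe, hz, hfix h hh]
    have h2 : h • z ∈ π ⁻¹' {p} := h1
    rwa [hpre, Set.mem_singleton_iff] at h2
  have part1 : ∀ l : G, IsLoxodromic G X l → l • p ≠ p := by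
    intro l hlox hlp
    obtain ⟨hford, x, y, hxy, hfixset⟩ := hlox
    have hlH : l ∈ H := hord l hford hlp
    have hlz : l • z = z := hHz l hlH
    have hinj : Function.Injective (fun n : ℕ => l ^ n) :=
      injective_pow_iff_not_isOfFinOrder.2 hford
    obtain ⟨φ, rZ, aZ, hφ, hcsZ⟩ := hZext _ hinj
    obtain ⟨ψ, rX, aX, hψ, hcsX⟩ := hXext _ hcsZ.1
    have hcsZ' : IsConvSeq G Z (((fun n : ℕ => l ^ n) ∘ φ) ∘ ψ) rZ aZ := myConvSeq_comp hcsZ hψ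
    have hgz : ∀ n, (((fun n : ℕ => l ^ n) ∘ φ) ∘ ψ) n • z = z :=
      fun n => mySmul_pow_fixed hlz _
    have hxfix : l • x = x := by
      have hm : x ∈ {u : X | l • u = u} := hfixset ▸ Set.mem_insert x {y}
      exact hm
    have hyfix : l • y = y := by
      have hm : y ∈ {u : X | l • u = u} := hfixset ▸ Set.mem_insert_iff.2 (Or.inr rfl)
      exact hm
    have hneX : rX ≠ aX := by
      rintro rfl
      rcases myConvSeq_fixed_mem hcsX (fun n => mySmul_pow_fixed hxfix _) with e | e <;>
        rcases myConvSeq_fixed_mem hcsX (fun n => mySmul_pow_fixed hyfix _) with e' | e' <;>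
        exact hxy (e.trans e'.symm)
    have hneZ : rZ ≠ aZ :=
      myTransfer hZinf hZcont hZmin π hπc hπe hz hpre hcsX hcsZ' hgz hneX
    have hca := myCommute_fix hZinf hZcont hcsZ' (fun n => (Commute.refl l).pow_left _)
    apply hnolox l hlH
    refine ⟨hford, rZ, aZ, hneZ, ?_⟩
    ext w
    simp only [Set.mem_setOf_eq, Set.mem_insert_iff, Set.mem_singleton_iff]
    constructor
    · intro hw
      exact myConvSeq_fixed_mem hcsZ' (fun n => mySmul_pow_fixed hw _)
    · rintro (rfl | rfl)
      · exact hca.2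
      · exact hca.1
  refine ⟨part1, fun hHinf => ?_⟩
  refine ⟨⟨hHinf, ⟨p, hfix, ?_⟩, fun h hh hlox => part1 h hlox (hfix h hh)⟩, hfix⟩
  intro q hq
  by_contra hqp
  obtain ⟨g0, hg0inj, hg0H⟩ : ∃ g0 : ℕ → G, Function.Injective g0 ∧ ∀ n, g0 n ∈ H := by
    haveI : Infinite ↥(H : Set G) := Set.infinite_coe_iff.2 hHinf
    exact ⟨fun n => ((Infinite.natEmbedding ↥(H : Set G)) n : G),
      Subtype.coe_injective.comp (Infinite.natEmbedding ↥(H : Set G)).injective,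
      fun n => ((Infinite.natEmbedding ↥(H : Set G)) n).2⟩
  obtain ⟨φ, rZ, aZ, hφ, hcsZ⟩ := hZext g0 hg0inj
  obtain ⟨ψ, rX, aX, hψ, hcsX⟩ := hXext _ hcsZ.1
  have hcsZ' : IsConvSeq G Z ((g0 ∘ φ) ∘ ψ) rZ aZ := myConvSeq_comp hcsZ hψ
  have hgH : ∀ n, ((g0 ∘ φ) ∘ ψ) n ∈ H := fun n => hg0H _
  have hgz : ∀ n, ((g0 ∘ φ) ∘ ψ) n • z = z := fun n => hHz _ (hgH n)
  have hgp : ∀ n, ((g0 ∘ φ) ∘ ψ) n • p = p := fun n => hfix _ (hgH n)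
  have hgq : ∀ n, ((g0 ∘ φ) ∘ ψ) n • q = q := fun n => hq _ (hgH n)
  have hneX : rX ≠ aX := by
    rintro rfl
    rcases myConvSeq_fixed_mem hcsX hgp with e | e <;>
      rcases myConvSeq_fixed_mem hcsX hgq with e' | e' <;>
      exact hqp (e'.trans e.symm)
  have hneZ : rZ ≠ aZ :=
    myTransfer hZinf hZcont hZmin π hπc hπe hz hpre hcsX hcsZ' hgz hneX
  rcases myConvSeq_fixed_mem hcsZ' hgz with hzr | hza
  · obtain ⟨h, hhH, hl⟩ := myLoxInH ⟨hZinf, hZcont, hZext⟩ hZmin H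
      (show aZ ≠ z by rw [hzr]; exact hneZ.symm) hHz hgH
      (show IsConvSeq G Z ((g0 ∘ φ) ∘ ψ) z aZ by rw [hzr]; exact hcsZ')
    exact hnolox h hhH hl
  · have hinv := myConvSeq_inv hcsZ'
    obtain ⟨h, hhH, hl⟩ := myLoxInH ⟨hZinf, hZcont, hZext⟩ hZmin H
      (show rZ ≠ z by rw [hza]; exact hneZ) hHz
      (fun n => H.inv_mem (hgH n))
      (show IsConvSeq G Z (fun n => (((g0 ∘ φ) ∘ ψ) n)⁻¹) z rZ by rw [hza]; exact hinv)
    exact hnolox h hhH hl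
end

section
/- Let G be a countable group with a continuous action on a compact metrizable space Σ such that the induced action on a G-invariant infinite compact subset is a convergence action. If a subgroup H ≤ G acts on Σ as a convergence group and fixes exactly the two points r, a of its limit set, and another subgroup H' also has limit set exactly {r, a}, then the subgroup generated by all subgroups whose limit sets equal {r, a} fixes {r, a} setwise; consequently, if G is generated by a family of infinite subgroups {G_λ} such that the (l=1,2)-graph of the family is connected and some pair generates a subgroup with two-point limit set, then Λ(G, Σ) = {r, a} and G is virtually infinite cyclic or fixes the pair. -/
open Filter Topology Pointwise

section Aux

variable {G : Type} [Group G] {X : Type} [UniformSpace X] [MulAction G X]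

lemma convSeq_mul_right [CompactSpace X] (hc : ∀ g : G, Continuous fun x : X => g • x)
    {g : ℕ → G} {r a : X} (h : IsConvSeq G X g r a) (k : G) :
    IsConvSeq G X (fun n => g n * k⁻¹) (k • r) a := by
  obtain ⟨hinj, h1, h2⟩ := h
  refine ⟨(mul_left_injective k⁻¹).comp hinj, ?_, ?_⟩
  · intro K hK hrK
    have hK' : IsCompact ((fun x : X => k⁻¹ • x) '' K) := hK.image (hc k⁻¹)
    have hr' : r ∉ (fun x : X => k⁻¹ • x) '' K := by
      rintro ⟨x, hx, hxr⟩
      apply hrK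
      have : x = k • r := by rw [← hxr, smul_inv_smul]
      rwa [this] at hx
    have h3 := (h1 _ hK' hr').comp (fun x : X => k⁻¹ • x)
    have hsub : K ⊆ (fun x : X => k⁻¹ • x) ⁻¹' ((fun x : X => k⁻¹ • x) '' K) :=
      fun x hx => Set.mem_image_of_mem _ hx
    simp only [mul_smul]
    exact h3.mono hsub
  · intro K hK haK
    have hu : UniformContinuous (fun x : X => k • x) :=
      CompactSpace.uniformContinuous_of_continuous (hc k)
    have h3 := hu.comp_tendstoUniformlyOn (h2 K hK haK)
    simp only [mul_inv_rev, inv_inv, mul_smul]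
    exact h3

lemma convSeq_mul_left [CompactSpace X] (hc : ∀ g : G, Continuous fun x : X => g • x)
    {g : ℕ → G} {r a : X} (h : IsConvSeq G X g r a) (k : G) :
    IsConvSeq G X (fun n => k * g n) r (k • a) := by
  obtain ⟨hinj, h1, h2⟩ := h
  refine ⟨(mul_right_injective k).comp hinj, ?_, ?_⟩
  · intro K hK hrK
    have hu : UniformContinuous (fun x : X => k • x) :=
      CompactSpace.uniformContinuous_of_continuous (hc k)
    have h3 := hu.comp_tendstoUniformlyOn (h1 K hK hrK)
    simp only [mul_smul]
    exact h3
  · intro K hK haK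
    have hK' : IsCompact ((fun x : X => k⁻¹ • x) '' K) := hK.image (hc k⁻¹)
    have ha' : a ∉ (fun x : X => k⁻¹ • x) '' K := by
      rintro ⟨x, hx, hxa⟩
      apply haK
      have : x = k • a := by rw [← hxa, smul_inv_smul]
      rwa [this] at hx
    have h3 := (h2 _ hK' ha').comp (fun x : X => k⁻¹ • x)
    have hsub : K ⊆ (fun x : X => k⁻¹ • x) ⁻¹' ((fun x : X => k⁻¹ • x) '' K) :=
      fun x hx => Set.mem_image_of_mem _ hx
    simp only [mul_inv_rev, mul_smul]
    exact h3.mono hsub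

lemma limitSetOf_smul_mem [CompactSpace X] (hc : ∀ g : G, Continuous fun x : X => g • x)
    {K : Subgroup G} {p : X} (hp : p ∈ limitSetOf G X K) {k : G} (hk : k ∈ K) :
    k • p ∈ limitSetOf G X K := by
  obtain ⟨g, r', a', hmem, hcv, hp⟩ := hp
  rcases hp with hp | hp
  · rw [hp]
    exact ⟨fun n => g n * k⁻¹, k • r', a',
      fun n => mul_mem (hmem n) (inv_mem hk), convSeq_mul_right hc hcv k, Or.inl rfl⟩
  · rw [hp]
    exact ⟨fun n => k * g n, r', k • a',
      fun n => mul_mem hk (hmem n), convSeq_mul_left hc hcv k, Or.inr rfl⟩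

end Aux

section Aux2

open Filter Topology Pointwise

variable {G : Type} [Group G] {X : Type} [UniformSpace X] [MulAction G X]

lemma pair_eq_pair {x y c d : X} (hxy : x ≠ y) (hcd : c ≠ d)
    (hc : c ∈ ({x, y} : Set X)) (hd : d ∈ ({x, y} : Set X)) :
    ({c, d} : Set X) = {x, y} := by
  simp only [Set.mem_insert_iff, Set.mem_singleton_iff] at hc hd
  rcases hc with rfl | rfl <;> rcases hd with rfl | rfl
  · exact absurd rfl hcd
  · rfl
  · exact Set.pair_comm c d
  · exact absurd rfl hcd

lemma smul_pair_eq {k : G} {x y : X} (hxy : x ≠ y)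
    (h1 : k • x ∈ ({x, y} : Set X)) (h2 : k • y ∈ ({x, y} : Set X)) :
    k • ({x, y} : Set X) = {x, y} := by
  have : k • ({x, y} : Set X) = {k • x, k • y} := by
    rw [Set.smul_set_insert, Set.smul_set_singleton]
  rw [this]
  exact pair_eq_pair hxy (fun h => hxy (MulAction.injective k h)) h1 h2

lemma inv_smul_mem_pair {k : G} {x y w : X} (hxy : x ≠ y)
    (h1 : k • x ∈ ({x, y} : Set X)) (h2 : k • y ∈ ({x, y} : Set X))
    (hw : w ∈ ({x, y} : Set X)) : k⁻¹ • w ∈ ({x, y} : Set X) := by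
  have hp := smul_pair_eq hxy h1 h2
  have : k⁻¹ • w ∈ k⁻¹ • ({x, y} : Set X) := Set.smul_mem_smul_set hw
  rwa [← hp, inv_smul_smul] at this

/-- points of a convergence sequence whose entries stabilize a pair lie in the pair -/
lemma convSeq_points_mem_pair [T1Space X] {g : ℕ → G} {r' a' x y : X} (hxy : x ≠ y)
    (hst : ∀ n, g n • x ∈ ({x, y} : Set X) ∧ g n • y ∈ ({x, y} : Set X))
    (h : IsConvSeq G X g r' a') : r' ∈ ({x, y} : Set X) ∧ a' ∈ ({x, y} : Set X) := by
  have hcl : IsClosed ({x, y} : Set X) :=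
    (Set.finite_singleton y |>.insert x).isClosed
  have ha' : a' ∈ ({x, y} : Set X) := by
    obtain ⟨z, hz, hzr⟩ : ∃ z, z ∈ ({x, y} : Set X) ∧ z ≠ r' := by
      by_cases hxr : x = r'
      · exact ⟨y, Set.mem_insert_of_mem _ rfl, fun h' => hxy (hxr.trans h'.symm)⟩
      · exact ⟨x, Set.mem_insert _ _, hxr⟩
    have ht := (tendstoUniformlyOn_singleton_iff_tendsto).mp
      (h.2.1 {z} isCompact_singleton (by simpa using fun h' => hzr h'.symm))
    refine hcl.mem_of_tendsto ht (Filter.Eventually.of_forall fun n => ?_)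
    rcases hz with rfl | hz
    · exact (hst n).1
    · rcases hz with rfl; exact (hst n).2
  have hr' : r' ∈ ({x, y} : Set X) := by
    obtain ⟨w, hw, hwa⟩ : ∃ w, w ∈ ({x, y} : Set X) ∧ w ≠ a' := by
      by_cases hxa : x = a'
      · exact ⟨y, Set.mem_insert_of_mem _ rfl, fun h' => hxy (hxa.trans h'.symm)⟩
      · exact ⟨x, Set.mem_insert _ _, hxa⟩
    have ht := (tendstoUniformlyOn_singleton_iff_tendsto).mp
      (h.2.2 {w} isCompact_singleton (by simpa using fun h' => hwa h'.symm))
    refine hcl.mem_of_tendsto ht (Filter.Eventually.of_forall fun n => ?_)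
    exact inv_smul_mem_pair hxy (hst n).1 (hst n).2 hw
  exact ⟨hr', ha'⟩

/-- a convergence sequence all of whose entries fix two distinct points has exactly
those two points as its repelling/attracting points -/
lemma convSeq_points_of_fix [T2Space X] {g : ℕ → G} {r' a' x y : X} (hxy : x ≠ y)
    (hfx : ∀ n, g n • x = x) (hfy : ∀ n, g n • y = y)
    (h : IsConvSeq G X g r' a') : ({r', a'} : Set X) = {x, y} := by
  have key : ∀ z : X, (∀ n, g n • z = z) → z = r' ∨ z = a' := by
    intro z hz
    by_cases hzr : z = r'
    · exact Or.inl hzr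
    · have ht := (tendstoUniformlyOn_singleton_iff_tendsto).mp
        (h.2.1 {z} isCompact_singleton (by simpa using fun h' => hzr h'.symm))
      simp only [hz] at ht
      exact Or.inr (tendsto_nhds_unique tendsto_const_nhds ht)
  rcases key x hfx with hx | hx <;> rcases key y hfy with hy | hy
  · exact absurd (hx.trans hy.symm) hxy
  · rw [← hx, ← hy]
  · rw [← hx, ← hy]; exact Set.pair_comm y x
  · exact absurd (hx.trans hy.symm) hxy

/-- an infinite subset of the group yields a convergence sequence with entries in it -/
lemma exists_convSeq_of_infinite (hca : IsConvergenceAction G X) {A : Set G}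
    (hA : A.Infinite) :
    ∃ (g : ℕ → G) (r a : X), (∀ n, g n ∈ A) ∧ IsConvSeq G X g r a := by
  obtain ⟨φ, r, a, hφ, hcs⟩ := hca.2.2 (fun n => ((Set.Infinite.natEmbedding A hA n : A) : G))
    (Subtype.coe_injective.comp (Set.Infinite.natEmbedding A hA).injective)
  exact ⟨fun n => ((Set.Infinite.natEmbedding A hA (φ n) : A) : G), r, a,
    fun n => (Set.Infinite.natEmbedding A hA (φ n)).2, hcs⟩

lemma limitSetOf_mono {K K' : Subgroup G} (h : K ≤ K') :
    limitSetOf G X K ⊆ limitSetOf G X K' := by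
  rintro p ⟨g, r', a', hmem, hcv, hp⟩
  exact ⟨g, r', a', fun n => h (hmem n), hcv, hp⟩

end Aux2

section Aux3

open Filter Topology Pointwise

variable {G : Type} [Group G] {X : Type} [UniformSpace X] [MulAction G X]
variable [CompactSpace X] [T2Space X]

/-- If every element of `M` stabilizes the pair `{x,y}`, then any infinite subgroup
`N'` of `M` has limit set exactly `{x,y}`. -/
lemma limitSetOf_eq_pair_of_stab (hca : IsConvergenceAction G X) {x y : X} (hxy : x ≠ y)
    {M N' : Subgroup G} (hle : N' ≤ M) (hN'inf : (N' : Set G).Infinite)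
    (hstab : ∀ k ∈ M, k • x ∈ ({x, y} : Set X) ∧ k • y ∈ ({x, y} : Set X)) :
    limitSetOf G X N' = {x, y} := by
  apply Set.Subset.antisymm
  · rintro p ⟨g, r', a', hmem, hcv, hp⟩
    have hpts := convSeq_points_mem_pair hxy (fun n => hstab _ (hle (hmem n))) hcv
    rcases hp with hp | hp
    · rw [hp]; exact hpts.1
    · rw [hp]; exact hpts.2
  · -- the subgroup of N' fixing x pointwise is infinite
    set Pset : Set G := {k | k ∈ N' ∧ k • x = x} with hPdef
    have hswap : ∀ k ∈ N', k • x ≠ x → k • x = y := by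
      intro k hk hkx
      rcases (hstab k (hle hk)).1 with h | h
      · exact absurd h hkx
      · exact h
    have hPinf : Pset.Infinite := by
      by_contra hfin
      rw [Set.not_infinite] at hfin
      obtain ⟨k₁, hk₁N, hk₁P⟩ : ∃ k₁, k₁ ∈ (N' : Set G) ∧ k₁ ∉ Pset := by
        by_contra hno
        push_neg at hno
        exact hN'inf (hfin.subset fun k hk => hno k hk)
      have hk₁x : k₁ • x = y := hswap k₁ hk₁N (fun h => hk₁P ⟨hk₁N, h⟩)
      have cover : (N' : Set G) ⊆ Pset ∪ (fun k => k₁ * k) '' Pset := by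
        intro k hk
        by_cases hkP : k ∈ Pset
        · exact Or.inl hkP
        · refine Or.inr ⟨k₁⁻¹ * k, ⟨mul_mem (inv_mem hk₁N) hk, ?_⟩, by
            simp [mul_inv_cancel_left]⟩
          have hkx : k • x = y := hswap k hk (fun h => hkP ⟨hk, h⟩)
          rw [mul_smul, hkx, ← hk₁x, inv_smul_smul]
      exact hN'inf ((hfin.union (hfin.image _)).subset cover)
    obtain ⟨g, r', a', hmemP, hcv⟩ := exists_convSeq_of_infinite hca hPinf
    have hfx : ∀ n, g n • x = x := fun n => (hmemP n).2
    have hfy : ∀ n, g n • y = y := by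
      intro n
      rcases (hstab _ (hle (hmemP n).1)).2 with h | h
      · exact absurd (MulAction.injective (g n) (h.trans (hfx n).symm)) hxy.symm
      · exact h
    have hpair := convSeq_points_of_fix hxy hfx hfy hcv
    intro p hp
    rw [← hpair] at hp
    rcases hp with hp | hp
    · exact ⟨g, r', a', fun n => (hmemP n).1, hcv, Or.inl hp⟩
    · exact ⟨g, r', a', fun n => (hmemP n).1, hcv, Or.inr (by simpa using hp)⟩

/-- If `N ≤ M` is infinite with limit set `{x,y}` and the limit set of `M` is finite,
then the limit set of `M` is also `{x,y}`. -/
lemma limitSetOf_eq_pair_of_finite (hca : IsConvergenceAction G X) {x y : X} (hxy : x ≠ y)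
    {M N : Subgroup G} (hle : N ≤ M) (hNinf : (N : Set G).Infinite)
    (hT : ¬ (limitSetOf G X M).Infinite)
    (hN : limitSetOf G X N = {x, y}) : limitSetOf G X M = {x, y} := by
  have hc : ∀ g : G, Continuous fun x : X => g • x := hca.2.1
  have hsub : ({x, y} : Set X) ⊆ limitSetOf G X M := hN ▸ limitSetOf_mono hle
  obtain ⟨g, r', a', hmem, hcv⟩ := exists_convSeq_of_infinite hca hNinf
  have hmemN : ∀ n, g n ∈ N := fun n => hmem n
  have hr'mem : r' ∈ ({x, y} : Set X) := by
    rw [← hN]; exact ⟨g, r', a', hmemN, hcv, Or.inl rfl⟩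
  have hTfin : (limitSetOf G X M).Finite := Set.not_infinite.mp hT
  apply Set.Subset.antisymm
  · intro p hpT
    by_contra hp
    have evA : ∀ z ∈ limitSetOf G X M, z ≠ r' → ∀ᶠ n in atTop, g n • z = a' := by
      intro z hz hzr
      have ht := (tendstoUniformlyOn_singleton_iff_tendsto).mp
        (hcv.2.1 {z} isCompact_singleton (by simpa using fun h' => hzr h'.symm))
      have hmemT : ∀ n, g n • z ∈ limitSetOf G X M :=
        fun n => limitSetOf_smul_mem hc hz (hle (hmemN n))
      have hfinT : (limitSetOf G X M \ {a'}).Finite := hTfin.subset Set.diff_subset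
      have hop : IsOpen (limitSetOf G X M \ {a'})ᶜ := hfinT.isClosed.isOpen_compl
      have hmema : a' ∈ (limitSetOf G X M \ {a'})ᶜ := by simp
      filter_upwards [ht.eventually (hop.mem_nhds hmema)] with n hn
      have := hmemT n
      simp only [Set.mem_compl_iff, Set.mem_diff, Set.mem_singleton_iff, not_and,
        not_not] at hn
      exact hn this
    obtain ⟨q, hq, hqr⟩ : ∃ q, q ∈ ({x, y} : Set X) ∧ q ≠ r' := by
      by_cases hxr : x = r'
      · exact ⟨y, Set.mem_insert_of_mem _ rfl, fun h' => hxy (hxr.trans h'.symm)⟩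
      · exact ⟨x, Set.mem_insert _ _, hxr⟩
    have hpr : p ≠ r' := fun h => hp (h ▸ hr'mem)
    have hpq : p ≠ q := fun h => hp (h ▸ hq)
    obtain ⟨n, hn1, hn2⟩ := ((evA p hpT hpr).and (evA q (hsub hq) hqr)).exists
    exact hpq (MulAction.injective (g n) (hn1.trans hn2.symm))
  · exact hsub

end Aux3

/-- if a subgroup has two-point limit set `{r, a}` and stabilizes it,
then the subgroup generated by all subgroups with limit set `{r, a}` stabilizes
`{r, a}` setwise; consequently, if `G` is generated by a family of infinite
subgroups whose (l=1,2)-graph is connected and some pair generates a subgroup with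
limit set `{r, a}`, then `Λ(G, Σ) = {r, a}` and `G` is virtually infinite cyclic
or stabilizes the pair. -/
theorem stmt14 {G : Type} [Group G] [Countable G] {S' : Type}
    [MetricSpace S'] [CompactSpace S'] [MulAction G S']
    (hc : ∀ g : G, Continuous fun x : S' => g • x)
    (S : Set S') (hSinv : ∀ (g : G), ∀ x ∈ S, g • x ∈ S)
    (hScomp : IsCompact S) (hSinf : S.Infinite)
    (hSconv : @IsConvergenceAction G _ ↥S _ (invariantSubAction S hSinv))
    (r a : S') (hra : r ≠ a)
    (H H' : Subgroup G)
    (hH : limitSetOf G S' H = {r, a})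
    (hHfix : ∀ h ∈ H, h • ({r, a} : Set S') = {r, a})
    (hH' : limitSetOf G S' H' = {r, a}) :
    (∀ g ∈ (⨆ K ∈ {K : Subgroup G | limitSetOf G S' K = {r, a}}, K : Subgroup G),
      g • ({r, a} : Set S') = {r, a}) ∧
    (∀ {L : Type} (Gf : L → Subgroup G),
      (∀ l, ((Gf l : Subgroup G) : Set G).Infinite) →
      (⨆ l, Gf l) = ⊤ →
      (∀ l m : L, Relation.ReflTransGen
        (fun u v => u ≠ v ∧ Infinite ↥(Gf u ⊔ Gf v) ∧
          NoNonElementaryAction ↥(Gf u ⊔ Gf v)) l m) →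
      (∃ u v : L, u ≠ v ∧ limitSetOf G S' (Gf u ⊔ Gf v) = {r, a}) →
      limitSet G S' = {r, a} ∧
        ((∃ C : Subgroup G, IsCyclic ↥C ∧ C.FiniteIndex ∧ (C : Set G).Infinite) ∨
          ∀ g : G, g • ({r, a} : Set S') = {r, a})) := by
  letI actG : MulAction G ↥S := invariantSubAction S hSinv
  haveI hCS : CompactSpace ↥S := isCompact_iff_compactSpace.mp hScomp
  have hcaS : IsConvergenceAction G ↥S := hSconv
  have hcS : ∀ g : G, Continuous fun x : ↥S => g • x := hcaS.2.1
  -- two distinct points of S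
  obtain ⟨x₁, hx₁⟩ := hSinf.nonempty
  obtain ⟨y₁, hy₁⟩ := (hSinf.diff (Set.finite_singleton x₁)).nonempty
  have hxy₁ : x₁ ≠ y₁ := fun h => hy₁.2 (by simp [h])
  -- points of any convergence sequence on S' lie in S
  have hptsS : ∀ (g : ℕ → G) (r' a' : S'), IsConvSeq G S' g r' a' → r' ∈ S ∧ a' ∈ S := by
    intro g r' a' hcv
    have haux : ∀ (h : ℕ → G) (b c : S'), (∀ K : Set S', IsCompact K → b ∉ K →
        TendstoUniformlyOn (fun n x => h n • x) (fun _ => c) atTop K) → c ∈ S := by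
      intro h b c hb
      obtain ⟨z, hz, hzb⟩ : ∃ z, z ∈ S ∧ z ≠ b := by
        by_cases h : x₁ = b
        · exact ⟨y₁, hy₁.1, fun hyb => hxy₁ (h.trans hyb.symm)⟩
        · exact ⟨x₁, hx₁, h⟩
      have ht := (tendstoUniformlyOn_singleton_iff_tendsto).mp
        (hb {z} isCompact_singleton (by simpa using fun h' => hzb h'.symm))
      exact hScomp.isClosed.mem_of_tendsto ht
        (Filter.Eventually.of_forall fun n => hSinv _ _ hz)
    exact ⟨haux (fun n => (g n)⁻¹) a' r' hcv.2.2, haux g r' a' hcv.2.1⟩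
  -- r and a lie in S
  have hrS : r ∈ S := by
    have hmem : r ∈ limitSetOf G S' H := by rw [hH]; exact Set.mem_insert _ _
    obtain ⟨g, r', a', _, hcv, hp⟩ := hmem
    rcases hp with hp | hp
    · rw [hp]; exact (hptsS g r' a' hcv).1
    · rw [hp]; exact (hptsS g r' a' hcv).2
  have haS : a ∈ S := by
    have hmem : a ∈ limitSetOf G S' H := by rw [hH]; exact Set.mem_insert_of_mem _ rfl
    obtain ⟨g, r', a', _, hcv, hp⟩ := hmem
    rcases hp with hp | hp
    · rw [hp]; exact (hptsS g r' a' hcv).1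
    · rw [hp]; exact (hptsS g r' a' hcv).2
  set r₀ : ↥S := ⟨r, hrS⟩ with hr₀def
  set a₀ : ↥S := ⟨a, haS⟩ with ha₀def
  have hra0 : r₀ ≠ a₀ := fun h => hra (congrArg Subtype.val h)
  set pair : Set ↥S := {r₀, a₀} with hpairdef
  have hval : ∀ (k : G) (z : ↥S), ((k • z : ↥S) : S') = k • (z : S') := fun _ _ => rfl
  -- membership transfer between S' and ↥S
  have memup : ∀ z : ↥S, (z : S') ∈ ({r, a} : Set S') → z ∈ pair := by
    intro z hz
    rcases hz with hz | hz
    · exact Or.inl (Subtype.ext hz)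
    · exact Or.inr (by simpa using Subtype.ext (by simpa using hz : (z : S') = a))
  have memdown : ∀ z : ↥S, z ∈ pair → (z : S') ∈ ({r, a} : Set S') := by
    intro z hz
    rcases hz with hz | hz
    · exact Or.inl (congrArg Subtype.val hz)
    · exact Or.inr (by simpa using congrArg Subtype.val (by simpa using hz : z = a₀))
  -- stabilization at the S' level from two-point limit sets
  have hstabS' : ∀ K : Subgroup G, limitSetOf G S' K = {r, a} →
      ∀ k ∈ K, k • r ∈ ({r, a} : Set S') ∧ k • a ∈ ({r, a} : Set S') := by
    intro K hK k hk
    have h1 : r ∈ limitSetOf G S' K := by rw [hK]; exact Set.mem_insert _ _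
    have h2 : a ∈ limitSetOf G S' K := by rw [hK]; exact Set.mem_insert_of_mem _ rfl
    exact ⟨hK ▸ limitSetOf_smul_mem hc h1 hk, hK ▸ limitSetOf_smul_mem hc h2 hk⟩
  constructor
  · -- Part 1
    intro g hg
    have hle : (⨆ K ∈ {K : Subgroup G | limitSetOf G S' K = {r, a}}, K) ≤
        MulAction.stabilizer G ({r, a} : Set S') := by
      refine iSup₂_le fun K hK k hk => ?_
      have h := hstabS' K hK k hk
      exact MulAction.mem_stabilizer_iff.mpr (smul_pair_eq hra h.1 h.2)
    exact MulAction.mem_stabilizer_iff.mp (hle hg)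
  · -- Part 2
    intro L Gf hGinf hGtop hconn hex
    -- finiteness of limit sets along edges
    have hfinM : ∀ M : Subgroup G, NoNonElementaryAction ↥M →
        ¬ (limitSetOf G ↥S M).Infinite := by
      intro M hno hinf
      letI actM : MulAction ↥M ↥S := MulAction.compHom _ M.subtype
      have hcaM : IsConvergenceAction ↥M ↥S := by
        refine ⟨hcaS.1, fun m => hcaS.2.1 (m : G), ?_⟩
        intro g hg
        obtain ⟨φ, r1, a1, hφ, hcs⟩ := hcaS.2.2 (fun n => (g n : G))
          (Subtype.coe_injective.comp hg)
        exact ⟨φ, r1, a1, hφ, ⟨hg.comp hφ.injective, hcs.2.1, hcs.2.2⟩⟩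
      apply hno ↥S hcaM
      apply hinf.mono
      rintro p ⟨g, r', a', hmem, hcv, hp⟩
      exact ⟨fun n => ⟨g n, hmem n⟩, r', a', fun n => trivial,
        ⟨fun n m h => hcv.1 (congrArg Subtype.val h), hcv.2.1, hcv.2.2⟩, hp⟩
    -- base point of the induction
    obtain ⟨u₀, v₀, huv₀, hpair₀⟩ := hex
    have hstab₀ : ∀ k ∈ Gf u₀ ⊔ Gf v₀, k • r₀ ∈ pair ∧ k • a₀ ∈ pair := by
      intro k hk
      have h := hstabS' _ hpair₀ k hk
      exact ⟨memup (k • r₀) (by rw [hval]; exact h.1),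
        memup (k • a₀) (by rw [hval]; exact h.2)⟩
    have hQ₀ : limitSetOf G ↥S (Gf u₀) = pair :=
      limitSetOf_eq_pair_of_stab hcaS hra0 le_sup_left (hGinf u₀) hstab₀
    -- propagation along edges
    have hstep : ∀ u v : L, (u ≠ v ∧ Infinite ↥(Gf u ⊔ Gf v) ∧
        NoNonElementaryAction ↥(Gf u ⊔ Gf v)) →
        limitSetOf G ↥S (Gf u) = pair → limitSetOf G ↥S (Gf v) = pair := by
      rintro u v ⟨-, -, hno⟩ hQu
      have hTfin := hfinM _ hno
      have hTM : limitSetOf G ↥S (Gf u ⊔ Gf v) = pair :=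
        limitSetOf_eq_pair_of_finite hcaS hra0 le_sup_left (hGinf u) hTfin hQu
      have hstabM : ∀ k ∈ Gf u ⊔ Gf v, k • r₀ ∈ pair ∧ k • a₀ ∈ pair := by
        intro k hk
        have h1 : r₀ ∈ limitSetOf G ↥S (Gf u ⊔ Gf v) := by
          rw [hTM]; exact Set.mem_insert _ _
        have h2 : a₀ ∈ limitSetOf G ↥S (Gf u ⊔ Gf v) := by
          rw [hTM]; exact Set.mem_insert_of_mem _ rfl
        exact ⟨hTM ▸ limitSetOf_smul_mem hcS h1 hk, hTM ▸ limitSetOf_smul_mem hcS h2 hk⟩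
      exact limitSetOf_eq_pair_of_stab hcaS hra0 le_sup_right (hGinf v) hstabM
    have hQ : ∀ l : L, limitSetOf G ↥S (Gf l) = pair := by
      intro l
      have hpath := hconn u₀ l
      induction hpath with
      | refl => exact hQ₀
      | tail h₁ h₂ ih => exact hstep _ _ h₂ ih
    -- every element of G stabilizes {r, a}
    have hstabAll : ∀ g : G, g • ({r, a} : Set S') = {r, a} := by
      intro g
      have hgm : g ∈ (⊤ : Subgroup G) := trivial
      rw [← hGtop] at hgm
      have hle : (⨆ l, Gf l) ≤ MulAction.stabilizer G ({r, a} : Set S') := by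
        refine iSup_le fun l k hk => ?_
        have h1 : r₀ ∈ limitSetOf G ↥S (Gf l) := by
          rw [hQ l]; exact Set.mem_insert _ _
        have h2 : a₀ ∈ limitSetOf G ↥S (Gf l) := by
          rw [hQ l]; exact Set.mem_insert_of_mem _ rfl
        have hr1 : k • r₀ ∈ pair := (hQ l) ▸ limitSetOf_smul_mem hcS h1 hk
        have ha1 : k • a₀ ∈ pair := (hQ l) ▸ limitSetOf_smul_mem hcS h2 hk
        have hd1 := memdown _ hr1
        have hd2 := memdown _ ha1
        rw [hval] at hd1 hd2
        exact MulAction.mem_stabilizer_iff.mpr (smul_pair_eq hra hd1 hd2)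
      exact MulAction.mem_stabilizer_iff.mp (hle hgm)
    refine ⟨?_, Or.inr hstabAll⟩
    apply Set.Subset.antisymm
    · rintro p ⟨g, r', a', -, hcv, hp⟩
      have hstabmem : ∀ n, g n • r ∈ ({r, a} : Set S') ∧ g n • a ∈ ({r, a} : Set S') := by
        intro n
        constructor
        · have : g n • r ∈ g n • ({r, a} : Set S') :=
            Set.smul_mem_smul_set (Set.mem_insert _ _)
          rwa [hstabAll] at this
        · have : g n • a ∈ g n • ({r, a} : Set S') :=
            Set.smul_mem_smul_set (Set.mem_insert_of_mem _ rfl)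
          rwa [hstabAll] at this
      have hpts := convSeq_points_mem_pair hra hstabmem hcv
      rcases hp with hp | hp
      · rw [hp]; exact hpts.1
      · rw [hp]; exact hpts.2
    · rw [← hH]; exact limitSetOf_mono le_top
end
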